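/- Let L be a restricted Lie algebra in characteristic 2 and M a restricted L-module. For n ≥ 2, the maps δ^n satisfy δ^{n+1} ∘ δ^n = 0 on restricted n-cochains. -/
import Mathlib


/-- Reindexing map deleting slot `i`: `v ∘ hdel i` is the tuple `v` with its `i`-th
entry removed. -/
def hdel (i : ℕ) : ℕ → ℕ := fun k => if k < i then k else k + 1

/-- Prepend an element to a tuple. -/
def hprep {L : Type*} (a : L) (v : ℕ → L) : ℕ → L :=
  fun k => if k = 0 then a else v (k - 1)

/-- Chevalley–Eilenberg differential of an `n`-cochain (characteristic 2, so no signs);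
cochains of arity `n` are encoded as functions of sequences depending on slots `< n`. -/
def dCE2 {L M : Type*} [LieRing L] [AddCommGroup M] [LieRingModule L M]
    (n : ℕ) (φ : (ℕ → L) → M) : (ℕ → L) → M :=
  fun v =>
    (∑ i ∈ Finset.range (n + 1), ⁅v i, φ (v ∘ hdel i)⁆) +
      ∑ i ∈ Finset.range (n + 1), ∑ j ∈ Finset.range (n + 1),
        if i < j then φ (hprep ⁅v i, v j⁆ (v ∘ hdel j ∘ hdel i)) else 0

/-- The restricted differential `δ^n` on the `ω`-part of a restricted `n`-cochain
`(φ, ω)` in characteristic 2; the sequence `z` encodes the variables `z_2, …, z_n`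
(so `n - 1` relevant slots). -/
def delta2 {L M : Type*} [LieRing L] [AddCommGroup M] [LieRingModule L M]
    (sq : L → L) (n : ℕ) (φ : (ℕ → L) → M) (ω : L → (ℕ → L) → M) :
    L → (ℕ → L) → M :=
  fun x z =>
    ⁅x, φ (hprep x z)⁆ +
    (∑ i ∈ Finset.range (n - 1), ⁅z i, ω x (z ∘ hdel i)⁆) +
    φ (hprep (sq x) z) +
    (∑ i ∈ Finset.range (n - 1), φ (hprep ⁅x, z i⁆ (hprep x (z ∘ hdel i)))) +
    ∑ i ∈ Finset.range (n - 1), ∑ j ∈ Finset.range (n - 1),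
      if i < j then ω x (hprep ⁅z i, z j⁆ (z ∘ hdel j ∘ hdel i)) else 0

/-- `(φ, ω)` is a restricted `n`-cochain (characteristic 2): `φ` is an alternating
multilinear `n`-cochain, `ω(x, z_2, …, z_{n-1})` is quadratic in `x`, alternating
multilinear in the `z`'s, and `ω(x+y, z) = ω(x, z) + ω(y, z) + φ(x, y, z)`. -/
def IsRestrictedCochain2 (F : Type*) {L M : Type*} [Field F] [LieRing L] [LieAlgebra F L]
    [AddCommGroup M] [Module F M] [LieRingModule L M]
    (n : ℕ) (φ : (ℕ → L) → M) (ω : L → (ℕ → L) → M) : Prop :=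
  (∀ (v : ℕ → L) (i : ℕ) (a b : L), i < n →
      φ (Function.update v i (a + b)) = φ (Function.update v i a) + φ (Function.update v i b)) ∧
  (∀ (v : ℕ → L) (i : ℕ) (c : F) (a : L), i < n →
      φ (Function.update v i (c • a)) = c • φ (Function.update v i a)) ∧
  (∀ (v : ℕ → L) (i j : ℕ), i < n → j < n → i ≠ j → v i = v j → φ v = 0) ∧
  (∀ (c : F) (x : L) (z : ℕ → L), ω (c • x) z = c ^ 2 • ω x z) ∧
  (∀ (x : L) (z : ℕ → L) (i : ℕ) (a b : L), i < n - 2 →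
      ω x (Function.update z i (a + b)) = ω x (Function.update z i a) + ω x (Function.update z i b)) ∧
  (∀ (x : L) (z : ℕ → L) (i : ℕ) (c : F) (a : L), i < n - 2 →
      ω x (Function.update z i (c • a)) = c • ω x (Function.update z i a)) ∧
  (∀ (x : L) (z : ℕ → L) (i j : ℕ), i < n - 2 → j < n - 2 → i ≠ j → z i = z j → ω x z = 0) ∧
  (∀ (x y : L) (z : ℕ → L), ω (x + y) z = ω x z + ω y z + φ (hprep x (hprep y z)))


set_option maxHeartbeats 1000000

section infra
variable {L M γ : Type*}

lemma hdel_of_lt {i k : ℕ} (h : k < i) : hdel i k = k := if_pos h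
lemma hdel_of_ge {i k : ℕ} (h : i ≤ k) : hdel i k = k + 1 := if_neg (not_lt.2 h)

lemma hdel_lt_iff (i k l : ℕ) : hdel i k < hdel i l ↔ k < l := by
  unfold hdel; split_ifs <;> omega

lemma hdel_hdel_eq_iff {i j t : ℕ} (h : i < j) : hdel j t = i ↔ t = i := by
  unfold hdel; split_ifs <;> omega

lemma hprep_zero (a : L) (v : ℕ → L) : hprep a v 0 = a := rfl
lemma hprep_succ (a : L) (v : ℕ → L) (k : ℕ) : hprep a v (k+1) = v k := rfl

lemma hprep_comp_hdel_zero (a : L) (v : ℕ → L) : hprep a v ∘ hdel 0 = v := by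
  funext k; simp [hprep, hdel, Function.comp]

lemma hprep_comp_hdel_succ (a : L) (v : ℕ → L) (i : ℕ) :
    hprep a v ∘ hdel (i+1) = hprep a (v ∘ hdel i) := by
  funext k
  cases k with
  | zero => simp [hprep, hdel, Function.comp]
  | succ k =>
      simp only [Function.comp_apply, hdel, hprep]
      split_ifs <;> simp_all <;> omega

lemma hprep_comp_hdel_sz (a : L) (v : ℕ → L) (j : ℕ) :
    hprep a v ∘ (hdel (j+1) ∘ hdel 0) = v ∘ hdel j := by
  rw [← Function.comp_assoc, hprep_comp_hdel_succ, hprep_comp_hdel_zero]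

lemma hprep_comp_hdel_ss (a : L) (v : ℕ → L) (i j : ℕ) :
    hprep a v ∘ (hdel (j+1) ∘ hdel (i+1)) = hprep a (v ∘ (hdel j ∘ hdel i)) := by
  rw [← Function.comp_assoc, hprep_comp_hdel_succ, hprep_comp_hdel_succ,
    Function.comp_assoc]

end infra

/-- canonical two-fold deletion -/
def ddel {L : Type*} (z : ℕ → L) (p q : ℕ) : ℕ → L :=
  z ∘ (hdel (max p q) ∘ hdel (min p q))

/-- canonical three-fold deletion: pair `q < r` and extra point `p` sorted in -/
def tdel {L : Type*} (z : ℕ → L) (p q r : ℕ) : ℕ → L :=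
  if p < q then z ∘ (hdel r ∘ (hdel q ∘ hdel p))
  else if p < r then z ∘ (hdel r ∘ (hdel p ∘ hdel q))
  else z ∘ (hdel p ∘ (hdel r ∘ hdel q))

/-- canonical three-fold deletion: pair `i < j` and extra point `p` sorted in -/
def tdelp {L : Type*} (z : ℕ → L) (i j p : ℕ) : ℕ → L :=
  if p < i then z ∘ (hdel j ∘ (hdel i ∘ hdel p))
  else if p < j then z ∘ (hdel j ∘ (hdel p ∘ hdel i))
  else z ∘ (hdel p ∘ (hdel j ∘ hdel i))

/-- canonical four-fold deletion: pairs `i < j`, `p < q`, all distinct -/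
def qdel {L : Type*} (z : ℕ → L) (i j p q : ℕ) : ℕ → L :=
  if q < i then z ∘ (hdel j ∘ (hdel i ∘ (hdel q ∘ hdel p)))
  else if p < i then
    (if q < j then z ∘ (hdel j ∘ (hdel q ∘ (hdel i ∘ hdel p)))
     else z ∘ (hdel q ∘ (hdel j ∘ (hdel i ∘ hdel p))))
  else if q < j then z ∘ (hdel j ∘ (hdel q ∘ (hdel p ∘ hdel i)))
  else if p < j then z ∘ (hdel q ∘ (hdel j ∘ (hdel p ∘ hdel i)))
  else z ∘ (hdel q ∘ (hdel p ∘ (hdel j ∘ hdel i)))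

section tails
variable {L : Type*} (z : ℕ → L)

lemma ddel_comm (p q : ℕ) : ddel z p q = ddel z q p := by
  unfold ddel; rw [max_comm, min_comm]

lemma ddel_eq (i k : ℕ) : z ∘ (hdel i ∘ hdel k) = ddel z i (hdel i k) := by
  unfold ddel
  funext w
  simp only [Function.comp_apply]
  exact congrArg z (by unfold hdel; split_ifs <;> omega)

lemma ddel_of_lt {i j : ℕ} (h : i < j) : z ∘ (hdel j ∘ hdel i) = ddel z i j := by
  unfold ddel
  funext w
  simp only [Function.comp_apply]
  exact congrArg z (by unfold hdel; split_ifs <;> omega)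

lemma hdel_hdel {a b : ℕ} (h : a ≤ b) (k : ℕ) :
    hdel a (hdel b k) = hdel (b+1) (hdel a k) := by
  unfold hdel; split_ifs <;> omega

lemma tdel_eq (i k l : ℕ) (h : k < l) :
    z ∘ (hdel i ∘ (hdel l ∘ hdel k)) = tdel z i (hdel i k) (hdel i l) := by
  rcases Nat.lt_or_ge l i with h1 | h1
  · rw [hdel_of_lt (lt_trans h h1), hdel_of_lt h1]
    unfold tdel; rw [if_neg (by omega), if_neg (by omega)]
  · rcases Nat.lt_or_ge k i with h2 | h2
    · rw [hdel_of_lt h2, hdel_of_ge h1]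
      unfold tdel; rw [if_neg (by omega), if_pos (by omega)]
      funext w; simp only [Function.comp_apply]
      rw [hdel_hdel (show i ≤ l by omega)]
    · rw [hdel_of_ge h2, hdel_of_ge h1]
      unfold tdel; rw [if_pos (by omega)]
      funext w; simp only [Function.comp_apply]
      rw [hdel_hdel (show i ≤ l by omega), hdel_hdel (show i ≤ k by omega)]

lemma tdelp_eq (i j k : ℕ) (h : i < j) :
    z ∘ (hdel j ∘ (hdel i ∘ hdel k)) = tdelp z i j (hdel j (hdel i k)) := by
  rcases Nat.lt_or_ge k i with h1 | h1
  · rw [hdel_of_lt h1, hdel_of_lt (lt_trans h1 h)]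
    unfold tdelp; rw [if_pos h1]
  · rcases Nat.lt_or_ge (k+1) j with h2 | h2
    · rw [hdel_of_ge h1, hdel_of_lt h2]
      unfold tdelp; rw [if_neg (by omega), if_pos (by omega)]
      funext w; simp only [Function.comp_apply]
      rw [hdel_hdel (show i ≤ k by omega)]
    · rw [hdel_of_ge h1, hdel_of_ge h2]
      unfold tdelp; rw [if_neg (by omega), if_neg (by omega)]
      funext w; simp only [Function.comp_apply]
      rw [hdel_hdel (show i ≤ k by omega), hdel_hdel (show j ≤ k + 1 by omega)]

lemma qdel_eq (i j k l : ℕ) (hij : i < j) (hkl : k < l) :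
    z ∘ (hdel j ∘ (hdel i ∘ (hdel l ∘ hdel k)))
      = qdel z i j (hdel j (hdel i k)) (hdel j (hdel i l)) := by
  rcases Nat.lt_or_ge l i with h1 | h1
  · -- k < l < i
    rw [hdel_of_lt h1, hdel_of_lt (lt_trans hkl h1), hdel_of_lt (lt_trans h1 hij),
      hdel_of_lt (lt_trans (lt_trans hkl h1) hij)]
    unfold qdel; rw [if_pos h1]
  · rcases Nat.lt_or_ge k i with h2 | h2
    · -- k < i ≤ l
      rw [hdel_of_lt h2, hdel_of_ge h1, hdel_of_lt (lt_trans h2 hij)]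
      rcases Nat.lt_or_ge (l+1) j with h3 | h3
      · rw [hdel_of_lt h3]
        unfold qdel; rw [if_neg (by omega), if_pos (by omega), if_pos (by omega)]
        funext w; simp only [Function.comp_apply]
        rw [hdel_hdel (show i ≤ l by omega)]
      · rw [hdel_of_ge h3]
        unfold qdel; rw [if_neg (by omega), if_pos (by omega), if_neg (by omega)]
        funext w; simp only [Function.comp_apply]
        rw [hdel_hdel (show i ≤ l by omega), hdel_hdel (show j ≤ l + 1 by omega)]
    · -- i ≤ k < l
      rw [hdel_of_ge h2, hdel_of_ge h1]
      rcases Nat.lt_or_ge (l+1) j with h3 | h3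
      · rw [hdel_of_lt h3, hdel_of_lt (by omega)]
        unfold qdel; rw [if_neg (by omega), if_neg (by omega), if_pos (by omega)]
        funext w; simp only [Function.comp_apply]
        rw [hdel_hdel (show i ≤ l by omega), hdel_hdel (show i ≤ k by omega)]
      · rw [hdel_of_ge h3]
        rcases Nat.lt_or_ge (k+1) j with h4 | h4
        · rw [hdel_of_lt h4]
          unfold qdel
          rw [if_neg (by omega), if_neg (by omega), if_neg (by omega), if_pos (by omega)]
          funext w; simp only [Function.comp_apply]
          rw [hdel_hdel (show i ≤ l by omega), hdel_hdel (show i ≤ k by omega),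
            hdel_hdel (show j ≤ l + 1 by omega)]
        · rw [hdel_of_ge h4]
          unfold qdel
          rw [if_neg (by omega), if_neg (by omega), if_neg (by omega), if_neg (by omega)]
          funext w; simp only [Function.comp_apply]
          rw [hdel_hdel (show i ≤ l by omega), hdel_hdel (show i ≤ k by omega),
            hdel_hdel (show j ≤ l + 1 by omega), hdel_hdel (show j ≤ k + 1 by omega)]

lemma qdel_swap {i j p q : ℕ} (hij : i < j) (hpq : p < q) (h1 : ¬ p = i) (h2 : ¬ p = j)
    (h3 : ¬ q = i) (h4 : ¬ q = j) : qdel z p q i j = qdel z i j p q := by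
  rcases Nat.lt_or_ge q i with hA | hB
  · -- p < q < i < j
    rw [show qdel z p q i j = z ∘ (hdel j ∘ (hdel i ∘ (hdel q ∘ hdel p))) by
        unfold qdel; rw [if_neg (by omega), if_neg (by omega), if_neg (by omega),
          if_neg (by omega)],
      show qdel z i j p q = z ∘ (hdel j ∘ (hdel i ∘ (hdel q ∘ hdel p))) by
        unfold qdel; rw [if_pos (by omega)]]
  · rcases Nat.lt_or_ge p i with hC | hD
    · rcases Nat.lt_or_ge q j with hE | hF
      · -- p < i < q < j
        rw [show qdel z p q i j = z ∘ (hdel j ∘ (hdel q ∘ (hdel i ∘ hdel p))) by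
            unfold qdel; rw [if_neg (by omega), if_neg (by omega), if_neg (by omega),
              if_pos (by omega)],
          show qdel z i j p q = z ∘ (hdel j ∘ (hdel q ∘ (hdel i ∘ hdel p))) by
            unfold qdel; rw [if_neg (by omega), if_pos (by omega), if_pos (by omega)]]
      · -- p < i < j < q
        rw [show qdel z p q i j = z ∘ (hdel q ∘ (hdel j ∘ (hdel i ∘ hdel p))) by
            unfold qdel; rw [if_neg (by omega), if_neg (by omega), if_pos (by omega)],
          show qdel z i j p q = z ∘ (hdel q ∘ (hdel j ∘ (hdel i ∘ hdel p))) by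
            unfold qdel; rw [if_neg (by omega), if_pos (by omega), if_neg (by omega)]]
    · rcases Nat.lt_or_ge q j with hE | hF
      · -- i < p < q < j
        rw [show qdel z p q i j = z ∘ (hdel j ∘ (hdel q ∘ (hdel p ∘ hdel i))) by
            unfold qdel; rw [if_neg (by omega), if_pos (by omega), if_neg (by omega)],
          show qdel z i j p q = z ∘ (hdel j ∘ (hdel q ∘ (hdel p ∘ hdel i))) by
            unfold qdel; rw [if_neg (by omega), if_neg (by omega), if_pos (by omega)]]
      · rcases Nat.lt_or_ge p j with hG | hH
        · -- i < p < j < q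
          rw [show qdel z p q i j = z ∘ (hdel q ∘ (hdel j ∘ (hdel p ∘ hdel i))) by
              unfold qdel; rw [if_neg (by omega), if_pos (by omega), if_pos (by omega)],
            show qdel z i j p q = z ∘ (hdel q ∘ (hdel j ∘ (hdel p ∘ hdel i))) by
              unfold qdel; rw [if_neg (by omega), if_neg (by omega), if_neg (by omega),
                if_pos (by omega)]]
        · -- i < j < p < q
          rw [show qdel z p q i j = z ∘ (hdel q ∘ (hdel p ∘ (hdel j ∘ hdel i))) by
              unfold qdel; rw [if_pos (by omega)],
            show qdel z i j p q = z ∘ (hdel q ∘ (hdel p ∘ (hdel j ∘ hdel i))) by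
              unfold qdel; rw [if_neg (by omega), if_neg (by omega), if_neg (by omega),
                if_neg (by omega)]]

-- sorted-triple evaluations
lemma tdel_s1 {a b c : ℕ} (h1 : a < b) (h2 : b < c) :
    tdel z a b c = z ∘ (hdel c ∘ (hdel b ∘ hdel a)) := by
  unfold tdel; rw [if_pos h1]
lemma tdel_s2 {a b c : ℕ} (h1 : a < b) (h2 : b < c) :
    tdel z b a c = z ∘ (hdel c ∘ (hdel b ∘ hdel a)) := by
  unfold tdel; rw [if_neg (by omega), if_pos (by omega)]
lemma tdel_s3 {a b c : ℕ} (h1 : a < b) (h2 : b < c) :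
    tdel z c a b = z ∘ (hdel c ∘ (hdel b ∘ hdel a)) := by
  unfold tdel; rw [if_neg (by omega), if_neg (by omega)]
lemma tdelp_s1 {a b c : ℕ} (h1 : a < b) (h2 : b < c) :
    tdelp z a b c = z ∘ (hdel c ∘ (hdel b ∘ hdel a)) := by
  unfold tdelp; rw [if_neg (by omega), if_neg (by omega)]
lemma tdelp_s2 {a b c : ℕ} (h1 : a < b) (h2 : b < c) :
    tdelp z a c b = z ∘ (hdel c ∘ (hdel b ∘ hdel a)) := by
  unfold tdelp; rw [if_neg (by omega), if_pos (by omega)]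
lemma tdelp_s3 {a b c : ℕ} (h1 : a < b) (h2 : b < c) :
    tdelp z b c a = z ∘ (hdel c ∘ (hdel b ∘ hdel a)) := by
  unfold tdelp; rw [if_pos (by omega)]
end tails

section sums
variable {β : Type*} [AddCommMonoid β]
open Finset

/-- Reindex a sum over `range N` through the monotone injection `hdel i`. -/
lemma sum_hdel (N i : ℕ) (hi : i < N + 1) (f : ℕ → β) :
    ∑ k ∈ range N, f (hdel i k) = ∑ q ∈ range (N+1), if i = q then 0 else f q := by
  have : ∑ q ∈ range (N+1), (if i = q then 0 else f q)
      = ∑ q ∈ (range (N+1)).filter (fun q => ¬ q = i), f q := by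
    rw [Finset.sum_filter]
    exact Finset.sum_congr rfl (fun q _ => by by_cases h : q = i <;> simp [h, Ne.symm, eq_comm])
  rw [this]
  apply Finset.sum_nbij' (i := fun k => hdel i k) (j := fun q => if q < i then q else q - 1)
  · intro a ha; simp only [mem_range] at ha ⊢
    simp only [mem_filter, mem_range, hdel]; split_ifs <;> omega
  · intro a ha; simp only [mem_filter, mem_range] at ha; simp only [mem_range]; split_ifs <;> omega
  · intro a ha; simp only [mem_range] at ha; simp only [hdel]; split_ifs <;> omega
  · intro a ha; simp only [mem_filter, mem_range] at ha; simp only [hdel]; split_ifs <;> omega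
  · intro a ha; rfl

lemma sum_pair_split (N : ℕ) (g : ℕ → ℕ → β) :
    (∑ i ∈ range N, ∑ j ∈ range N, if i = j then 0 else g i j)
      = ∑ i ∈ range N, ∑ j ∈ range N, if i < j then g i j + g j i else 0 := by
  have h1 : ∀ i j : ℕ, (if i = j then (0:β) else g i j)
      = (if i < j then g i j else 0) + (if j < i then g i j else 0) := by
    intro i j
    rcases Nat.lt_trichotomy i j with h|h|h
    · simp [h, h.ne, Nat.lt_asymm h]
    · simp [h]
    · simp [h, h.ne', Nat.lt_asymm h]
  simp_rw [h1, Finset.sum_add_distrib]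
  have h2 : (∑ i ∈ range N, ∑ j ∈ range N, if j < i then g i j else 0)
      = ∑ i ∈ range N, ∑ j ∈ range N, if i < j then g j i else 0 := Finset.sum_comm
  rw [h2]
  simp_rw [← Finset.sum_add_distrib, ite_add_ite, add_zero]

lemma sum_triple_split (N : ℕ) (g : ℕ → ℕ → ℕ → β) :
    (∑ i ∈ range N, ∑ j ∈ range N, ∑ p ∈ range N,
        if i < j ∧ ¬ p = i ∧ ¬ p = j then g i j p else 0)
      = ∑ a ∈ range N, ∑ b ∈ range N, ∑ c ∈ range N,
          if a < b ∧ b < c then g a b c + g a c b + g b c a else 0 := by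
  have h1 : ∀ i j p : ℕ, (if i < j ∧ ¬ p = i ∧ ¬ p = j then g i j p else 0)
      = ((if i < j ∧ j < p then g i j p else 0) + (if i < p ∧ p < j then g i j p else 0))
        + (if p < i ∧ i < j then g i j p else 0) := by
    intro i j p
    split_ifs <;> first | omega | simp
  simp_rw [h1, Finset.sum_add_distrib]
  have h2 : (∑ i ∈ range N, ∑ j ∈ range N, ∑ p ∈ range N,
        if i < p ∧ p < j then g i j p else 0)
      = ∑ a ∈ range N, ∑ b ∈ range N, ∑ c ∈ range N,
          if a < b ∧ b < c then g a c b else 0 :=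
    Finset.sum_congr rfl (fun i _ => Finset.sum_comm)
  have h3 : (∑ i ∈ range N, ∑ j ∈ range N, ∑ p ∈ range N,
        if p < i ∧ i < j then g i j p else 0)
      = ∑ a ∈ range N, ∑ b ∈ range N, ∑ c ∈ range N,
          if a < b ∧ b < c then g b c a else 0 := by
    rw [show (∑ i ∈ range N, ∑ j ∈ range N, ∑ p ∈ range N,
        if p < i ∧ i < j then g i j p else 0)
      = ∑ i ∈ range N, ∑ p ∈ range N, ∑ j ∈ range N,
        if p < i ∧ i < j then g i j p else 0 from
      Finset.sum_congr rfl (fun i _ => Finset.sum_comm)]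
    exact Finset.sum_comm
  rw [h2, h3]
  simp_rw [← Finset.sum_add_distrib, ite_add_ite, add_zero]

end sums

section sums2
variable {β : Type*} [AddCommMonoid β]
open Finset

lemma sum_comm4 (s : Finset ℕ) (f : ℕ → ℕ → ℕ → ℕ → β) :
    (∑ i ∈ s, ∑ j ∈ s, ∑ p ∈ s, ∑ q ∈ s, f i j p q)
      = ∑ p ∈ s, ∑ q ∈ s, ∑ i ∈ s, ∑ j ∈ s, f i j p q := by
  rw [show (∑ i ∈ s, ∑ j ∈ s, ∑ p ∈ s, ∑ q ∈ s, f i j p q)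
      = ∑ i ∈ s, ∑ p ∈ s, ∑ j ∈ s, ∑ q ∈ s, f i j p q from
    Finset.sum_congr rfl (fun i _ => Finset.sum_comm)]
  rw [show (∑ i ∈ s, ∑ p ∈ s, ∑ j ∈ s, ∑ q ∈ s, f i j p q)
      = ∑ i ∈ s, ∑ p ∈ s, ∑ q ∈ s, ∑ j ∈ s, f i j p q from
    Finset.sum_congr rfl (fun i _ => Finset.sum_congr rfl (fun p _ => Finset.sum_comm))]
  rw [show (∑ i ∈ s, ∑ p ∈ s, ∑ q ∈ s, ∑ j ∈ s, f i j p q)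
      = ∑ p ∈ s, ∑ i ∈ s, ∑ q ∈ s, ∑ j ∈ s, f i j p q from Finset.sum_comm]
  rw [show (∑ p ∈ s, ∑ i ∈ s, ∑ q ∈ s, ∑ j ∈ s, f i j p q)
      = ∑ p ∈ s, ∑ q ∈ s, ∑ i ∈ s, ∑ j ∈ s, f i j p q from
    Finset.sum_congr rfl (fun p _ => Finset.sum_comm)]

/-- Sum over two disjoint ordered pairs, of a function symmetric under swapping
the pairs, rewritten so the two occurrences pair up. -/
lemma sum_quad_split (N : ℕ) (g : ℕ → ℕ → ℕ → ℕ → β) :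
    (∑ i ∈ range N, ∑ j ∈ range N, ∑ p ∈ range N, ∑ q ∈ range N,
        if i < j ∧ p < q ∧ ¬ p = i ∧ ¬ p = j ∧ ¬ q = i ∧ ¬ q = j then g i j p q else 0)
      = ∑ i ∈ range N, ∑ j ∈ range N, ∑ p ∈ range N, ∑ q ∈ range N,
          if i < j ∧ p < q ∧ ¬ p = i ∧ ¬ p = j ∧ ¬ q = i ∧ ¬ q = j ∧ i < p
            then g i j p q + g p q i j else 0 := by
  have h1 : ∀ i j p q : ℕ,
      (if i < j ∧ p < q ∧ ¬ p = i ∧ ¬ p = j ∧ ¬ q = i ∧ ¬ q = j then g i j p q else 0)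
        = (if i < j ∧ p < q ∧ ¬ p = i ∧ ¬ p = j ∧ ¬ q = i ∧ ¬ q = j ∧ i < p
            then g i j p q else 0)
          + (if p < q ∧ i < j ∧ ¬ i = p ∧ ¬ i = q ∧ ¬ j = p ∧ ¬ j = q ∧ p < i
            then g i j p q else 0) := by
    intro i j p q; split_ifs <;> first | omega | simp
  simp_rw [h1, Finset.sum_add_distrib]
  rw [show (∑ i ∈ range N, ∑ j ∈ range N, ∑ p ∈ range N, ∑ q ∈ range N,
          if p < q ∧ i < j ∧ ¬ i = p ∧ ¬ i = q ∧ ¬ j = p ∧ ¬ j = q ∧ p < i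
            then g i j p q else 0)
      = ∑ p ∈ range N, ∑ q ∈ range N, ∑ i ∈ range N, ∑ j ∈ range N,
          if p < q ∧ i < j ∧ ¬ i = p ∧ ¬ i = q ∧ ¬ j = p ∧ ¬ j = q ∧ p < i
            then g i j p q else 0 from sum_comm4 _ _]
  simp_rw [← Finset.sum_add_distrib, ite_add_ite, add_zero]

end sums2

section peel
variable {L M γ : Type*}
lemma sum_peel_hprep [AddCommMonoid γ] (N : ℕ) (a : L) (u : ℕ → L)
    (f : L → (ℕ → L) → γ) :
    ∑ i ∈ Finset.range (N+1), f ((hprep a u) i) (hprep a u ∘ hdel i)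
      = f a u + ∑ i ∈ Finset.range N, f (u i) (hprep a (u ∘ hdel i)) := by
  rw [Finset.sum_range_succ']
  simp only [hprep_succ, hprep_zero, hprep_comp_hdel_zero, hprep_comp_hdel_succ]
  rw [add_comm]

lemma sum_peel_hprep2 [AddCommMonoid γ] (N : ℕ) (a : L) (u : ℕ → L)
    (g : L → L → (ℕ → L) → γ) :
    (∑ i ∈ Finset.range (N+1), ∑ j ∈ Finset.range (N+1),
        if i < j then g ((hprep a u) i) ((hprep a u) j) (hprep a u ∘ (hdel j ∘ hdel i))
        else 0)
      = (∑ j ∈ Finset.range N, g a (u j) (u ∘ hdel j))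
        + ∑ i ∈ Finset.range N, ∑ j ∈ Finset.range N,
            if i < j then g (u i) (u j) (hprep a (u ∘ (hdel j ∘ hdel i))) else 0 := by
  rw [Finset.sum_range_succ']
  have h0 : (∑ j ∈ Finset.range (N+1),
      if 0 < j then g ((hprep a u) 0) ((hprep a u) j) (hprep a u ∘ (hdel j ∘ hdel 0))
      else 0) = ∑ j ∈ Finset.range N, g a (u j) (u ∘ hdel j) := by
    rw [Finset.sum_range_succ']
    simp only [hprep_zero, hprep_succ, hprep_comp_hdel_sz, Nat.succ_pos, if_pos,
      Nat.lt_irrefl, if_neg, add_zero, not_lt_zero']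
    simp
  have hs : ∀ i ∈ Finset.range N, (∑ j ∈ Finset.range (N+1),
      if i+1 < j then g ((hprep a u) (i+1)) ((hprep a u) j) (hprep a u ∘ (hdel j ∘ hdel (i+1)))
      else 0)
      = ∑ j ∈ Finset.range N, if i < j then g (u i) (u j) (hprep a (u ∘ (hdel j ∘ hdel i))) else 0 := by
    intro i _
    rw [Finset.sum_range_succ']
    simp only [hprep_succ, hprep_comp_hdel_ss, Nat.add_lt_add_iff_right, Nat.not_lt_zero,
      if_neg, add_zero, not_lt_zero']
    simp
  rw [Finset.sum_congr rfl hs, h0, add_comm]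

lemma dCE2_hprep [LieRing L] [AddCommGroup M] [LieRingModule L M]
    (n : ℕ) (φ : (ℕ → L) → M) (a : L) (v : ℕ → L) :
    dCE2 n φ (hprep a v)
      = ⁅a, φ v⁆ + (∑ i ∈ Finset.range n, ⁅v i, φ (hprep a (v ∘ hdel i))⁆)
        + (∑ j ∈ Finset.range n, φ (hprep ⁅a, v j⁆ (v ∘ hdel j)))
        + ∑ i ∈ Finset.range n, ∑ j ∈ Finset.range n,
            if i < j then φ (hprep ⁅v i, v j⁆ (hprep a (v ∘ (hdel j ∘ hdel i)))) else 0 := by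
  show (∑ i ∈ Finset.range (n+1), ⁅hprep a v i, φ (hprep a v ∘ hdel i)⁆) + _ = _
  rw [sum_peel_hprep n a v (fun b w => ⁅b, φ w⁆),
    sum_peel_hprep2 n a v (fun b c w => φ (hprep ⁅b, c⁆ w))]
  abel

lemma delta2_apply [LieRing L] [AddCommGroup M] [LieRingModule L M]
    (sq : L → L) (n : ℕ) (φ : (ℕ → L) → M) (ω : L → (ℕ → L) → M) (x : L) (u : ℕ → L) :
    delta2 sq (n+2) φ ω x u
      = ⁅x, φ (hprep x u)⁆ + (∑ i ∈ Finset.range (n+1), ⁅u i, ω x (u ∘ hdel i)⁆)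
        + φ (hprep (sq x) u)
        + (∑ i ∈ Finset.range (n+1), φ (hprep ⁅x, u i⁆ (hprep x (u ∘ hdel i))))
        + ∑ i ∈ Finset.range (n+1), ∑ j ∈ Finset.range (n+1),
            if i < j then ω x (hprep ⁅u i, u j⁆ (u ∘ (hdel j ∘ hdel i))) else 0 := rfl

end peel

lemma char2_addself (F : Type*) {M : Type*} [Field F] [CharP F 2] [AddCommGroup M]
    [Module F M] (m : M) : m + m = 0 := by
  have h2 : (2 : F) = 0 := by exact_mod_cast CharP.cast_eq_zero F 2
  calc m + m = (2:F) • m := (two_smul F m).symm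
  _ = 0 := by rw [h2, zero_smul]

lemma char2_eq_of_add_eq_zero (F : Type*) {M : Type*} [Field F] [CharP F 2] [AddCommGroup M]
    [Module F M] {m m' : M} (h : m + m' = 0) : m = m' := by
  have h' := char2_addself F m'
  have : m + m' = m' + m' := by rw [h, h']
  exact add_right_cancel this

lemma char2_neg (F : Type*) {M : Type*} [Field F] [CharP F 2] [AddCommGroup M]
    [Module F M] (m : M) : -m = m := neg_eq_of_add_eq_zero_left (char2_addself F m)

section updates
variable {L : Type*}
lemma update_hprep0 (c a : L) (v : ℕ → L) :
    Function.update (hprep c v) 0 a = hprep a v := by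
  funext k; cases k <;> simp [Function.update, hprep]
lemma update_hprep1 (c d a : L) (v : ℕ → L) :
    Function.update (hprep c (hprep d v)) 1 a = hprep c (hprep a v) := by
  funext k
  match k with
  | 0 => simp [Function.update, hprep]
  | 1 => simp [Function.update, hprep]
  | (k+2) => simp [Function.update, hprep]
lemma update_hprep2 (c d e a : L) (v : ℕ → L) :
    Function.update (hprep c (hprep d (hprep e v))) 2 a = hprep c (hprep d (hprep a v)) := by
  funext k
  match k with
  | 0 => simp [Function.update, hprep]
  | 1 => simp [Function.update, hprep]
  | 2 => simp [Function.update, hprep]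
  | (k+3) => simp [Function.update, hprep]
end updates

section phiom
variable {F L M : Type*}

/-- additivity in slot 0 -/
lemma phi_add0 [AddCommGroup L] [AddCommGroup M] {φ : (ℕ → L) → M} {n : ℕ} (hn : 0 < n)
    (hadd : ∀ (v : ℕ → L) (i : ℕ) (a b : L), i < n →
      φ (Function.update v i (a + b)) = φ (Function.update v i a) + φ (Function.update v i b))
    (a b : L) (v : ℕ → L) :
    φ (hprep (a + b) v) = φ (hprep a v) + φ (hprep b v) := by
  have h := hadd (hprep a v) 0 a b hn
  simpa [update_hprep0] using h

lemma phi_zero0 [Field F] [CharP F 2] [AddCommGroup L] [Module F L] [AddCommGroup M]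
    [Module F M] {φ : (ℕ → L) → M} {n : ℕ} (hn : 0 < n)
    (hsmul : ∀ (v : ℕ → L) (i : ℕ) (c : F) (a : L), i < n →
      φ (Function.update v i (c • a)) = c • φ (Function.update v i a))
    (v : ℕ → L) : φ (hprep 0 v) = 0 := by
  have h := hsmul (hprep (0:L) v) 0 (0:F) (0:L) hn
  simpa [update_hprep0] using h

lemma phi_alt01 [AddCommGroup L] [AddCommGroup M] {φ : (ℕ → L) → M} {n : ℕ} (hn : 1 < n)
    (halt : ∀ (v : ℕ → L) (i j : ℕ), i < n → j < n → i ≠ j → v i = v j → φ v = 0)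
    (a : L) (v : ℕ → L) : φ (hprep a (hprep a v)) = 0 :=
  halt _ 0 1 (by omega) hn (by omega) rfl

lemma phi_swap01 (F : Type*) [Field F] [CharP F 2] [AddCommGroup L] [Module F L]
    [AddCommGroup M] [Module F M] {φ : (ℕ → L) → M} {n : ℕ} (hn : 1 < n)
    (hadd : ∀ (v : ℕ → L) (i : ℕ) (a b : L), i < n →
      φ (Function.update v i (a + b)) = φ (Function.update v i a) + φ (Function.update v i b))
    (halt : ∀ (v : ℕ → L) (i j : ℕ), i < n → j < n → i ≠ j → v i = v j → φ v = 0)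
    (a b : L) (v : ℕ → L) :
    φ (hprep a (hprep b v)) = φ (hprep b (hprep a v)) := by
  have hadd1 : ∀ (c a b : L) (v : ℕ → L), φ (hprep c (hprep (a+b) v))
      = φ (hprep c (hprep a v)) + φ (hprep c (hprep b v)) := by
    intro c a b v
    have h := hadd (hprep c (hprep a v)) 1 a b hn
    simpa [update_hprep1] using h
  have key : φ (hprep (a+b) (hprep (a+b) v)) = 0 := phi_alt01 hn halt _ v
  rw [phi_add0 (by omega) hadd, hadd1, hadd1] at key
  rw [phi_alt01 hn halt a v, phi_alt01 hn halt b v] at key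
  apply char2_eq_of_add_eq_zero F
  have : φ (hprep a (hprep b v)) + φ (hprep b (hprep a v))
      = 0 + φ (hprep a (hprep b v)) + (φ (hprep b (hprep a v)) + 0) := by abel
  rw [this, key]

lemma phi_swap12 (F : Type*) [Field F] [CharP F 2] [AddCommGroup L] [Module F L]
    [AddCommGroup M] [Module F M] {φ : (ℕ → L) → M} {n : ℕ} (hn : 2 < n)
    (hadd : ∀ (v : ℕ → L) (i : ℕ) (a b : L), i < n →
      φ (Function.update v i (a + b)) = φ (Function.update v i a) + φ (Function.update v i b))
    (halt : ∀ (v : ℕ → L) (i j : ℕ), i < n → j < n → i ≠ j → v i = v j → φ v = 0)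
    (c a b : L) (v : ℕ → L) :
    φ (hprep c (hprep a (hprep b v))) = φ (hprep c (hprep b (hprep a v))) := by
  have hadd1 : ∀ (c a b : L) (v : ℕ → L), φ (hprep c (hprep (a+b) v))
      = φ (hprep c (hprep a v)) + φ (hprep c (hprep b v)) := by
    intro c a b v
    have h := hadd (hprep c (hprep a v)) 1 a b (by omega)
    simpa [update_hprep1] using h
  have hadd2 : ∀ (c d a b : L) (v : ℕ → L), φ (hprep c (hprep d (hprep (a+b) v)))
      = φ (hprep c (hprep d (hprep a v))) + φ (hprep c (hprep d (hprep b v))) := by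
    intro c d a b v
    have h := hadd (hprep c (hprep d (hprep a v))) 2 a b hn
    simpa [update_hprep2] using h
  have halt12 : ∀ (a c : L) (v : ℕ → L), φ (hprep c (hprep a (hprep a v))) = 0 := by
    intro a c v
    exact halt _ 1 2 (by omega) hn (by omega) rfl
  have key : φ (hprep c (hprep (a+b) (hprep (a+b) v))) = 0 := halt12 _ _ _
  rw [hadd1, hadd2, hadd2] at key
  rw [halt12 a c v, halt12 b c v] at key
  apply char2_eq_of_add_eq_zero F
  have : φ (hprep c (hprep a (hprep b v))) + φ (hprep c (hprep b (hprep a v)))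
      = 0 + φ (hprep c (hprep a (hprep b v))) + (φ (hprep c (hprep b (hprep a v))) + 0) := by
    abel
  rw [this, key]

end phiom

section jac
variable {L M : Type*} [LieRing L] [AddCommGroup M] [LieRingModule L M]

lemma jacM (F : Type*) [Field F] [CharP F 2] [Module F M] (a b : L) (mm : M) :
    ⁅a, ⁅b, mm⁆⁆ + ⁅b, ⁅a, mm⁆⁆ + ⁅⁅a, b⁆, mm⁆ = 0 := by
  rw [leibniz_lie a b mm]
  have : ⁅⁅a, b⁆, mm⁆ + ⁅b, ⁅a, mm⁆⁆ + ⁅b, ⁅a, mm⁆⁆ + ⁅⁅a, b⁆, mm⁆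
      = (⁅⁅a, b⁆, mm⁆ + ⁅⁅a, b⁆, mm⁆) + (⁅b, ⁅a, mm⁆⁆ + ⁅b, ⁅a, mm⁆⁆) := by abel
  rw [this, char2_addself F, char2_addself F, add_zero]

lemma jacL3 (F : Type*) [Field F] [CharP F 2] [LieAlgebra F L] (u a b : L) :
    ⁅⁅u, a⁆, b⁆ + ⁅⁅u, b⁆, a⁆ + ⁅u, ⁅a, b⁆⁆ = 0 := by
  have hB : ⁅⁅u, b⁆, a⁆ = ⁅a, ⁅u, b⁆⁆ := by
    rw [← lie_skew a ⁅u, b⁆, char2_neg F]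
  rw [hB, leibniz_lie u a b]
  have : ⁅⁅u, a⁆, b⁆ + ⁅a, ⁅u, b⁆⁆ + (⁅⁅u, a⁆, b⁆ + ⁅a, ⁅u, b⁆⁆)
      = (⁅⁅u, a⁆, b⁆ + ⁅⁅u, a⁆, b⁆) + (⁅a, ⁅u, b⁆⁆ + ⁅a, ⁅u, b⁆⁆) := by abel
  rw [this, char2_addself F, char2_addself F, add_zero]

end jac


lemma lie_sum' {ι L M : Type*} [LieRing L] [AddCommGroup M] [LieRingModule L M] (x : L)
    (s : Finset ι) (f : ι → M) : ⁅x, ∑ i ∈ s, f i⁆ = ∑ i ∈ s, ⁅x, f i⁆ :=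
  map_sum (AddMonoidHom.mk' (fun mm => ⁅x, mm⁆) (lie_add x)) f s


lemma ite_sum_zero {ι β : Type*} [AddCommMonoid β] (P : Prop) [Decidable P]
    (s : Finset ι) (f : ι → β) :
    (if P then 0 else ∑ r ∈ s, f r) = ∑ r ∈ s, if P then 0 else f r := by
  split_ifs with h
  · simp
  · rfl

lemma sum_comm3 {β : Type*} [AddCommMonoid β] (s t u : Finset ℕ) (f : ℕ → ℕ → ℕ → β) :
    (∑ i ∈ s, ∑ q ∈ t, ∑ r ∈ u, f i q r) = ∑ q ∈ t, ∑ r ∈ u, ∑ i ∈ s, f i q r := by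
  rw [Finset.sum_comm]
  exact Finset.sum_congr rfl (fun q _ => Finset.sum_comm)

lemma addswap4 {β : Type*} [AddCommMonoid β] (p q : β) :
    p + q + (q + p) = p + p + (q + q) := by
  abel

lemma jacL4 {L : Type*} (F : Type*) [Field F] [CharP F 2] [LieRing L] [LieAlgebra F L]
    (a b c : L) : ⁅⁅a, b⁆, c⁆ + ⁅⁅a, c⁆, b⁆ + ⁅⁅b, c⁆, a⁆ = 0 := by
  have e : ⁅⁅b, c⁆, a⁆ = ⁅a, ⁅b, c⁆⁆ := by rw [← lie_skew a ⁅b, c⁆, char2_neg F]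
  rw [e]
  exact jacL3 F a b c

/-- For a restricted Lie algebra `L` in characteristic 2 and a restricted
`L`-module `M`, the restricted differentials satisfy `δ^{n+1} ∘ δ^n = 0` on restricted
`n`-cochains (`n ≥ 2`). -/
theorem delta_squared_eq_zero (F L M : Type*) [Field F] [CharP F 2]
    [LieRing L] [LieAlgebra F L]
    [AddCommGroup M] [Module F M] [LieRingModule L M] [LieModule F L M]
    (sq : L → L)
    (h1 : ∀ (c : F) (x : L), sq (c • x) = c ^ 2 • sq x)
    (h2 : ∀ x y : L, ⁅x, sq y⁆ = ⁅⁅x, y⁆, y⁆)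
    (h3 : ∀ x y : L, sq (x + y) = sq x + sq y + ⁅x, y⁆)
    (hres : ∀ (x : L) (m : M), ⁅sq x, m⁆ = ⁅x, ⁅x, m⁆⁆)
    (n : ℕ) (hn : 2 ≤ n) (φ : (ℕ → L) → M) (ω : L → (ℕ → L) → M)
    (hc : IsRestrictedCochain2 F n φ ω) :
    ∀ (x : L) (z : ℕ → L),
      delta2 sq (n + 1) (dCE2 n φ) (delta2 sq n φ ω) x z = 0 := by
  intro x z
  obtain ⟨m, rfl⟩ : ∃ m, n = m + 2 := ⟨n - 2, by omega⟩
  obtain ⟨hφadd, hφsmul, hφalt, hωsq, hωadd, hωsmul, hωalt, hωpol⟩ := hc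
  simp only [show m + 2 - 2 = m from rfl] at hωadd hωsmul hωalt
  have chM : ∀ mm : M, mm + mm = 0 := char2_addself F
  have φadd := phi_add0 (show 0 < m+2 by omega) hφadd
  have φzero := phi_zero0 (F := F) (show 0 < m+2 by omega) hφsmul
  have φsw01 := phi_swap01 F (show 1 < m+2 by omega) hφadd hφalt
  have φsw12 : ∀ (_ : 0 < m) (c a b : L) (v : ℕ → L),
      φ (hprep c (hprep a (hprep b v))) = φ (hprep c (hprep b (hprep a v))) :=
    fun hm => phi_swap12 F (by omega) hφadd hφalt
  have ωadd : ∀ (_ : 0 < m) (a b : L) (v : ℕ → L),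
      ω x (hprep (a+b) v) = ω x (hprep a v) + ω x (hprep b v) :=
    fun hm => phi_add0 hm (fun v i a b hi => hωadd x v i a b hi)
  have ωzero : ∀ (_ : 0 < m) (v : ℕ → L), ω x (hprep 0 v) = 0 :=
    fun hm => phi_zero0 (F := F) hm (fun v i c a hi => hωsmul x v i c a hi)
  have ωsw01 : ∀ (_ : 1 < m) (a b : L) (v : ℕ → L),
      ω x (hprep a (hprep b v)) = ω x (hprep b (hprep a v)) :=
    fun hm => phi_swap01 F hm (fun v i a b hi => hωadd x v i a b hi)
      (fun v i j hi hj hij hv => hωalt x v i j hi hj hij hv)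
  have jM : ∀ (a b : L) (mm : M), ⁅a, ⁅b, mm⁆⁆ + ⁅b, ⁅a, mm⁆⁆ + ⁅⁅a, b⁆, mm⁆ = 0 := jacM F
  have jL : ∀ u a b : L, ⁅⁅u, a⁆, b⁆ + ⁅⁅u, b⁆, a⁆ + ⁅u, ⁅a, b⁆⁆ = 0 := jacL3 F
  have jL4 : ∀ a b c : L, ⁅⁅a, b⁆, c⁆ + ⁅⁅a, c⁆, b⁆ + ⁅⁅b, c⁆, a⁆ = 0 := jacL4 F
  have h2x : ∀ b : L, ⁅sq x, b⁆ = ⁅⁅x, b⁆, x⁆ := by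
    intro b
    have e1 : ⁅sq x, b⁆ = ⁅b, sq x⁆ := by rw [← lie_skew (sq x) b, char2_neg F]
    have e2 : ⁅x, b⁆ = ⁅b, x⁆ := by rw [← lie_skew x b, char2_neg F]
    rw [e1, e2, h2 b x]
  rw [show m + 2 + 1 = m + 1 + 2 from rfl]
  rw [delta2_apply sq (m+1) (dCE2 (m+2) φ) (delta2 sq (m+2) φ ω) x z]
  simp only [show m + 1 + 1 = m + 2 from rfl]
  have hA : (⁅x, dCE2 (m+2) φ (hprep x z)⁆)
      = (⁅x, ⁅x, φ z⁆⁆)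
      + (∑ i ∈ Finset.range (m+2), ⁅x, ⁅z i, φ (hprep x (z ∘ hdel i))⁆⁆)
      + (∑ i ∈ Finset.range (m+2), ⁅x, φ (hprep ⁅x, z i⁆ (z ∘ hdel i))⁆)
      + (∑ i ∈ Finset.range (m+2), ∑ j ∈ Finset.range (m+2), if i < j then ⁅x, φ (hprep ⁅z i, z j⁆ (hprep x (z ∘ (hdel j ∘ hdel i))))⁆ else 0) := by
    rw [dCE2_hprep]
    simp only [lie_add, lie_sum', apply_ite (fun mm : M => ⁅x, mm⁆), lie_zero]

  have hB : (∑ i ∈ Finset.range (m+2), ⁅z i, delta2 sq (m+2) φ ω x (z ∘ hdel i)⁆)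
      = (∑ i ∈ Finset.range (m+2), ⁅z i, ⁅x, φ (hprep x (z ∘ hdel i))⁆⁆)
      + (∑ i ∈ Finset.range (m+2), ∑ k ∈ Finset.range (m+1), ⁅z i, ⁅z (hdel i k), ω x (z ∘ (hdel i ∘ hdel k))⁆⁆)
      + (∑ i ∈ Finset.range (m+2), ⁅z i, φ (hprep (sq x) (z ∘ hdel i))⁆)
      + (∑ i ∈ Finset.range (m+2), ∑ k ∈ Finset.range (m+1), ⁅z i, φ (hprep ⁅x, z (hdel i k)⁆ (hprep x (z ∘ (hdel i ∘ hdel k))))⁆)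
      + (∑ i ∈ Finset.range (m+2), ∑ k ∈ Finset.range (m+1), ∑ l ∈ Finset.range (m+1), if k < l then ⁅z i, ω x (hprep ⁅z (hdel i k), z (hdel i l)⁆ (z ∘ (hdel i ∘ (hdel l ∘ hdel k))))⁆ else 0) := by
    have hstep : ∀ i ∈ Finset.range (m+2), ⁅z i, delta2 sq (m+2) φ ω x (z ∘ hdel i)⁆
        = ⁅z i, ⁅x, φ (hprep x (z ∘ hdel i))⁆⁆ + (∑ k ∈ Finset.range (m+1), ⁅z i, ⁅z (hdel i k), ω x (z ∘ (hdel i ∘ hdel k))⁆⁆) + ⁅z i, φ (hprep (sq x) (z ∘ hdel i))⁆ + (∑ k ∈ Finset.range (m+1), ⁅z i, φ (hprep ⁅x, z (hdel i k)⁆ (hprep x (z ∘ (hdel i ∘ hdel k))))⁆) + (∑ k ∈ Finset.range (m+1), ∑ l ∈ Finset.range (m+1), if k < l then ⁅z i, ω x (hprep ⁅z (hdel i k), z (hdel i l)⁆ (z ∘ (hdel i ∘ (hdel l ∘ hdel k))))⁆ else 0) := by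
      intro i _
      rw [delta2_apply sq m φ ω x (z ∘ hdel i)]
      simp only [lie_add, lie_sum', apply_ite (fun mm : M => ⁅z i, mm⁆), lie_zero,
        Function.comp_apply, Function.comp_assoc]
    rw [Finset.sum_congr rfl hstep]
    simp only [Finset.sum_add_distrib]

  have hC : (dCE2 (m+2) φ (hprep (sq x) z))
      = (⁅sq x, φ z⁆)
      + (∑ i ∈ Finset.range (m+2), ⁅z i, φ (hprep (sq x) (z ∘ hdel i))⁆)
      + (∑ i ∈ Finset.range (m+2), φ (hprep ⁅sq x, z i⁆ (z ∘ hdel i)))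
      + (∑ i ∈ Finset.range (m+2), ∑ j ∈ Finset.range (m+2), if i < j then φ (hprep ⁅z i, z j⁆ (hprep (sq x) (z ∘ (hdel j ∘ hdel i)))) else 0) := by
    exact dCE2_hprep (m+2) φ (sq x) z

  have hD : (∑ i ∈ Finset.range (m+2), dCE2 (m+2) φ (hprep ⁅x, z i⁆ (hprep x (z ∘ hdel i))))
      = (∑ i ∈ Finset.range (m+2), ⁅⁅x, z i⁆, φ (hprep x (z ∘ hdel i))⁆)
      + (∑ i ∈ Finset.range (m+2), ⁅x, φ (hprep ⁅x, z i⁆ (z ∘ hdel i))⁆)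
      + (∑ i ∈ Finset.range (m+2), ∑ k ∈ Finset.range (m+1), ⁅z (hdel i k), φ (hprep ⁅x, z i⁆ (hprep x (z ∘ (hdel i ∘ hdel k))))⁆)
      + (∑ i ∈ Finset.range (m+2), φ (hprep ⁅⁅x, z i⁆, x⁆ (z ∘ hdel i)))
      + (∑ i ∈ Finset.range (m+2), ∑ k ∈ Finset.range (m+1), φ (hprep ⁅⁅x, z i⁆, z (hdel i k)⁆ (hprep x (z ∘ (hdel i ∘ hdel k)))))
      + (∑ i ∈ Finset.range (m+2), ∑ k ∈ Finset.range (m+1), φ (hprep ⁅x, z (hdel i k)⁆ (hprep ⁅x, z i⁆ (z ∘ (hdel i ∘ hdel k)))))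
      + (∑ i ∈ Finset.range (m+2), ∑ k ∈ Finset.range (m+1), ∑ l ∈ Finset.range (m+1), if k < l then φ (hprep ⁅z (hdel i k), z (hdel i l)⁆ (hprep ⁅x, z i⁆ (hprep x (z ∘ (hdel i ∘ (hdel l ∘ hdel k)))))) else 0) := by
    have hstep : ∀ i ∈ Finset.range (m+2), dCE2 (m+2) φ (hprep ⁅x, z i⁆ (hprep x (z ∘ hdel i)))
        = ⁅⁅x, z i⁆, φ (hprep x (z ∘ hdel i))⁆ + ⁅x, φ (hprep ⁅x, z i⁆ (z ∘ hdel i))⁆ + (∑ k ∈ Finset.range (m+1), ⁅z (hdel i k), φ (hprep ⁅x, z i⁆ (hprep x (z ∘ (hdel i ∘ hdel k))))⁆) + φ (hprep ⁅⁅x, z i⁆, x⁆ (z ∘ hdel i)) + (∑ k ∈ Finset.range (m+1), φ (hprep ⁅⁅x, z i⁆, z (hdel i k)⁆ (hprep x (z ∘ (hdel i ∘ hdel k))))) + (∑ k ∈ Finset.range (m+1), φ (hprep ⁅x, z (hdel i k)⁆ (hprep ⁅x, z i⁆ (z ∘ (hdel i ∘ hdel k))))) + (∑ k ∈ Finset.range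 (m+1), ∑ l ∈ Finset.range (m+1), if k < l then φ (hprep ⁅z (hdel i k), z (hdel i l)⁆ (hprep ⁅x, z i⁆ (hprep x (z ∘ (hdel i ∘ (hdel l ∘ hdel k)))))) else 0) := by
      intro i _
      rw [dCE2_hprep]
      rw [show (m:ℕ)+2 = m+1+1 from rfl]
      rw [sum_peel_hprep (m+1) x (z ∘ hdel i) (fun b w => ⁅b, φ (hprep ⁅x, z i⁆ w)⁆)]
      rw [sum_peel_hprep (m+1) x (z ∘ hdel i) (fun b w => φ (hprep ⁅⁅x, z i⁆, b⁆ w))]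
      rw [sum_peel_hprep2 (m+1) x (z ∘ hdel i) (fun b c w => φ (hprep ⁅b, c⁆ (hprep ⁅x, z i⁆ w)))]
      simp only [Function.comp_apply, Function.comp_assoc]
      abel
    rw [Finset.sum_congr rfl hstep]
    simp only [Finset.sum_add_distrib]

  have hE : (∑ i ∈ Finset.range (m+2), ∑ j ∈ Finset.range (m+2), if i < j then delta2 sq (m+2) φ ω x (hprep ⁅z i, z j⁆ (z ∘ (hdel j ∘ hdel i))) else 0)
      = (∑ i ∈ Finset.range (m+2), ∑ j ∈ Finset.range (m+2), if i < j then (⁅x, φ (hprep x (hprep ⁅z i, z j⁆ (z ∘ (hdel j ∘ hdel i))))⁆) else 0)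
      + (∑ i ∈ Finset.range (m+2), ∑ j ∈ Finset.range (m+2), if i < j then (⁅⁅z i, z j⁆, ω x (z ∘ (hdel j ∘ hdel i))⁆) else 0)
      + (∑ i ∈ Finset.range (m+2), ∑ j ∈ Finset.range (m+2), if i < j then (∑ k ∈ Finset.range m, ⁅z (hdel j (hdel i k)), ω x (hprep ⁅z i, z j⁆ (z ∘ (hdel j ∘ (hdel i ∘ hdel k))))⁆) else 0)
      + (∑ i ∈ Finset.range (m+2), ∑ j ∈ Finset.range (m+2), if i < j then (φ (hprep (sq x) (hprep ⁅z i, z j⁆ (z ∘ (hdel j ∘ hdel i))))) else 0)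
      + (∑ i ∈ Finset.range (m+2), ∑ j ∈ Finset.range (m+2), if i < j then (φ (hprep ⁅x, ⁅z i, z j⁆⁆ (hprep x (z ∘ (hdel j ∘ hdel i))))) else 0)
      + (∑ i ∈ Finset.range (m+2), ∑ j ∈ Finset.range (m+2), if i < j then (∑ k ∈ Finset.range m, φ (hprep ⁅x, z (hdel j (hdel i k))⁆ (hprep x (hprep ⁅z i, z j⁆ (z ∘ (hdel j ∘ (hdel i ∘ hdel k))))))) else 0)
      + (∑ i ∈ Finset.range (m+2), ∑ j ∈ Finset.range (m+2), if i < j then (∑ k ∈ Finset.range m, ω x (hprep ⁅⁅z i, z j⁆, z (hdel j (hdel i k))⁆ (z ∘ (hdel j ∘ (hdel i ∘ hdel k))))) else 0)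
      + (∑ i ∈ Finset.range (m+2), ∑ j ∈ Finset.range (m+2), if i < j then (∑ k ∈ Finset.range m, ∑ l ∈ Finset.range m, if k < l then ω x (hprep ⁅z (hdel j (hdel i k)), z (hdel j (hdel i l))⁆ (hprep ⁅z i, z j⁆ (z ∘ (hdel j ∘ (hdel i ∘ (hdel l ∘ hdel k)))))) else 0) else 0) := by
    have hstep : ∀ i ∈ Finset.range (m+2), ∀ j ∈ Finset.range (m+2),
        (if i < j then delta2 sq (m+2) φ ω x (hprep ⁅z i, z j⁆ (z ∘ (hdel j ∘ hdel i))) else 0)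
        = (if i < j then (⁅x, φ (hprep x (hprep ⁅z i, z j⁆ (z ∘ (hdel j ∘ hdel i))))⁆) else 0) + (if i < j then (⁅⁅z i, z j⁆, ω x (z ∘ (hdel j ∘ hdel i))⁆) else 0) + (if i < j then (∑ k ∈ Finset.range m, ⁅z (hdel j (hdel i k)), ω x (hprep ⁅z i, z j⁆ (z ∘ (hdel j ∘ (hdel i ∘ hdel k))))⁆) else 0) + (if i < j then (φ (hprep (sq x) (hprep ⁅z i, z j⁆ (z ∘ (hdel j ∘ hdel i))))) else 0) + (if i < j then (φ (hprep ⁅x, ⁅z i, z j⁆⁆ (hprep x (z ∘ (hdel j ∘ hdel i))))) else 0) + (if i < j then (∑ k ∈ Finset.range m, φ (hprep ⁅x, z (hdel j (hdel i k))⁆ (hprep x (hprep ⁅z i, z j⁆ (z ∘ (hdel j ∘ (hdel i ∘ hdel k))))))) else 0) + (if i < j then (∑ k ∈ Finset.range m, ω x (hprep ⁅⁅z i, z j⁆, z (hdel j (hdel i k))⁆ (z ∘ (hdel j ∘ (hdel i ∘ hdel k))))) else 0) + (if i < j then (∑ k ∈ Finset.range m, ∑ l ∈ Finset.range m, if k <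 l then ω x (hprep ⁅z (hdel j (hdel i k)), z (hdel j (hdel i l))⁆ (hprep ⁅z i, z j⁆ (z ∘ (hdel j ∘ (hdel i ∘ (hdel l ∘ hdel k)))))) else 0) else 0) := by
      intro i _ j _
      by_cases h : i < j
      · simp only [if_pos h]
        rw [delta2_apply sq m φ ω x (hprep ⁅z i, z j⁆ (z ∘ (hdel j ∘ hdel i)))]
        rw [sum_peel_hprep m ⁅z i, z j⁆ (z ∘ (hdel j ∘ hdel i)) (fun b w => ⁅b, ω x w⁆)]
        rw [sum_peel_hprep m ⁅z i, z j⁆ (z ∘ (hdel j ∘ hdel i)) (fun b w => φ (hprep ⁅x, b⁆ (hprep x w)))]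
        rw [sum_peel_hprep2 m ⁅z i, z j⁆ (z ∘ (hdel j ∘ hdel i)) (fun b c w => ω x (hprep ⁅b, c⁆ w))]
        simp only [Function.comp_apply, Function.comp_assoc]
        abel
      · simp only [if_neg h, add_zero, zero_add]
    rw [Finset.sum_congr rfl (fun i hi => Finset.sum_congr rfl (fun j hj => hstep i hi j hj))]
    simp only [Finset.sum_add_distrib]

  rw [hA, hB, hC, hD, hE]
  have hg1 : (⁅x, ⁅x, φ z⁆⁆) + (⁅sq x, φ z⁆) = 0 := by
    rw [hres x (φ z)]
    exact chM _
  have hg2 : (∑ i ∈ Finset.range (m+2), ⁅x, ⁅z i, φ (hprep x (z ∘ hdel i))⁆⁆) + (∑ i ∈ Finset.range (m+2), ⁅z i, ⁅x, φ (hprep x (z ∘ hdel i))⁆⁆) + (∑ i ∈ Finset.range (m+2), ⁅⁅x, z i⁆, φ (hprep x (z ∘ hdel i))⁆) = 0 := by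
    simp only [← Finset.sum_add_distrib]
    refine Finset.sum_eq_zero (fun i _ => ?_)
    exact jM x (z i) (φ (hprep x (z ∘ hdel i)))
  have hg3 : (∑ i ∈ Finset.range (m+2), ⁅x, φ (hprep ⁅x, z i⁆ (z ∘ hdel i))⁆) + (∑ i ∈ Finset.range (m+2), ⁅x, φ (hprep ⁅x, z i⁆ (z ∘ hdel i))⁆) = 0 := by
    simp only [← Finset.sum_add_distrib]
    refine Finset.sum_eq_zero (fun i _ => ?_)
    exact chM _
  have hg4 : (∑ i ∈ Finset.range (m+2), ∑ j ∈ Finset.range (m+2), if i < j then ⁅x, φ (hprep ⁅z i, z j⁆ (hprep x (z ∘ (hdel j ∘ hdel i))))⁆ else 0) + (∑ i ∈ Finset.range (m+2), ∑ j ∈ Finset.range (m+2), if i < j then (⁅x, φ (hprep x (hprep ⁅z i, z j⁆ (z ∘ (hdel j ∘ hdel i))))⁆) else 0) = 0 := by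
    simp only [← Finset.sum_add_distrib, ite_add_ite, add_zero]
    refine Finset.sum_eq_zero (fun i _ => Finset.sum_eq_zero (fun j _ => ?_))
    by_cases h : i < j
    · simp only [if_pos h]
      rw [φsw01 x ⁅z i, z j⁆ (z ∘ (hdel j ∘ hdel i))]
      exact chM _
    · simp only [if_neg h]
  have hg5 : (∑ i ∈ Finset.range (m+2), ∑ k ∈ Finset.range (m+1), ⁅z i, ⁅z (hdel i k), ω x (z ∘ (hdel i ∘ hdel k))⁆⁆) + (∑ i ∈ Finset.range (m+2), ∑ j ∈ Finset.range (m+2), if i < j then (⁅⁅z i, z j⁆, ω x (z ∘ (hdel j ∘ hdel i))⁆) else 0) = 0 := by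
    have e1 : (∑ i ∈ Finset.range (m+2), ∑ k ∈ Finset.range (m+1), ⁅z i, ⁅z (hdel i k), ω x (z ∘ (hdel i ∘ hdel k))⁆⁆)
        = ∑ i ∈ Finset.range (m+2), ∑ q ∈ Finset.range (m+2), if i = q then 0 else ⁅z i, ⁅z q, ω x (ddel z i q)⁆⁆ := by
      refine Finset.sum_congr rfl (fun i hi => ?_)
      have inner : ∀ k ∈ Finset.range (m+1), ⁅z i, ⁅z (hdel i k), ω x (z ∘ (hdel i ∘ hdel k))⁆⁆
          = ⁅z i, ⁅z (hdel i k), ω x (ddel z i (hdel i k))⁆⁆ :=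
        fun k _ => by rw [ddel_eq z i k]
      rw [Finset.sum_congr rfl inner,
        sum_hdel (m+1) i (by have := Finset.mem_range.mp hi; omega)
          (fun q => ⁅z i, ⁅z q, ω x (ddel z i q)⁆⁆)]
      try simp only [show m+1+1 = m+2 from rfl]
    have e2 : (∑ i ∈ Finset.range (m+2), ∑ j ∈ Finset.range (m+2), if i < j then ⁅⁅z i, z j⁆, ω x (z ∘ (hdel j ∘ hdel i))⁆ else 0)
        = ∑ i ∈ Finset.range (m+2), ∑ j ∈ Finset.range (m+2), if i < j then ⁅⁅z i, z j⁆, ω x (ddel z i j)⁆ else 0 := by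
      refine Finset.sum_congr rfl (fun i _ => Finset.sum_congr rfl (fun j _ => ?_))
      by_cases h : i < j
      · simp only [if_pos h]; rw [ddel_of_lt z h]
      · simp only [if_neg h]
    rw [e1, e2, sum_pair_split (m+2) (fun i q => ⁅z i, ⁅z q, ω x (ddel z i q)⁆⁆)]
    simp only [← Finset.sum_add_distrib, ite_add_ite, add_zero]
    refine Finset.sum_eq_zero (fun i _ => Finset.sum_eq_zero (fun j _ => ?_))
    by_cases h : i < j
    · simp only [if_pos h]
      rw [ddel_comm z j i]
      exact jM (z i) (z j) (ω x (ddel z i j))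
    · simp only [if_neg h]
  have hg6 : (∑ i ∈ Finset.range (m+2), ⁅z i, φ (hprep (sq x) (z ∘ hdel i))⁆) + (∑ i ∈ Finset.range (m+2), ⁅z i, φ (hprep (sq x) (z ∘ hdel i))⁆) = 0 := by
    simp only [← Finset.sum_add_distrib]
    refine Finset.sum_eq_zero (fun i _ => ?_)
    exact chM _
  have hg7 : (∑ i ∈ Finset.range (m+2), ∑ k ∈ Finset.range (m+1), ⁅z i, φ (hprep ⁅x, z (hdel i k)⁆ (hprep x (z ∘ (hdel i ∘ hdel k))))⁆) + (∑ i ∈ Finset.range (m+2), ∑ k ∈ Finset.range (m+1), ⁅z (hdel i k), φ (hprep ⁅x, z i⁆ (hprep x (z ∘ (hdel i ∘ hdel k))))⁆) = 0 := by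
    have e1 : (∑ i ∈ Finset.range (m+2), ∑ k ∈ Finset.range (m+1), ⁅z i, φ (hprep ⁅x, z (hdel i k)⁆ (hprep x (z ∘ (hdel i ∘ hdel k))))⁆)
        = ∑ i ∈ Finset.range (m+2), ∑ q ∈ Finset.range (m+2), if i = q then 0 else ⁅z i, φ (hprep ⁅x, z q⁆ (hprep x (ddel z i q)))⁆ := by
      refine Finset.sum_congr rfl (fun i hi => ?_)
      have inner : ∀ k ∈ Finset.range (m+1), ⁅z i, φ (hprep ⁅x, z (hdel i k)⁆ (hprep x (z ∘ (hdel i ∘ hdel k))))⁆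
          = ⁅z i, φ (hprep ⁅x, z (hdel i k)⁆ (hprep x (ddel z i (hdel i k))))⁆ :=
        fun k _ => by rw [ddel_eq z i k]
      rw [Finset.sum_congr rfl inner,
        sum_hdel (m+1) i (by have := Finset.mem_range.mp hi; omega)
          (fun q => ⁅z i, φ (hprep ⁅x, z q⁆ (hprep x (ddel z i q)))⁆)]
      try simp only [show m+1+1 = m+2 from rfl]
    have e2 : (∑ i ∈ Finset.range (m+2), ∑ k ∈ Finset.range (m+1), ⁅z (hdel i k), φ (hprep ⁅x, z i⁆ (hprep x (z ∘ (hdel i ∘ hdel k))))⁆)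
        = ∑ i ∈ Finset.range (m+2), ∑ q ∈ Finset.range (m+2), if i = q then 0 else ⁅z q, φ (hprep ⁅x, z i⁆ (hprep x (ddel z i q)))⁆ := by
      refine Finset.sum_congr rfl (fun i hi => ?_)
      have inner : ∀ k ∈ Finset.range (m+1), ⁅z (hdel i k), φ (hprep ⁅x, z i⁆ (hprep x (z ∘ (hdel i ∘ hdel k))))⁆
          = ⁅z (hdel i k), φ (hprep ⁅x, z i⁆ (hprep x (ddel z i (hdel i k))))⁆ :=
        fun k _ => by rw [ddel_eq z i k]
      rw [Finset.sum_congr rfl inner,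
        sum_hdel (m+1) i (by have := Finset.mem_range.mp hi; omega)
          (fun q => ⁅z q, φ (hprep ⁅x, z i⁆ (hprep x (ddel z i q)))⁆)]
      try simp only [show m+1+1 = m+2 from rfl]
    rw [e1, e2]
    simp only [← Finset.sum_add_distrib, ite_add_ite, add_zero]
    rw [sum_pair_split (m+2) (fun i q => ⁅z i, φ (hprep ⁅x, z q⁆ (hprep x (ddel z i q)))⁆ + ⁅z q, φ (hprep ⁅x, z i⁆ (hprep x (ddel z i q)))⁆)]
    refine Finset.sum_eq_zero (fun i _ => Finset.sum_eq_zero (fun j _ => ?_))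
    by_cases h : i < j
    · simp only [if_pos h]
      rw [ddel_comm z j i, addswap4, chM, chM, add_zero]
    · simp only [if_neg h]
  have hg8 : (∑ i ∈ Finset.range (m+2), ∑ k ∈ Finset.range (m+1), ∑ l ∈ Finset.range (m+1), if k < l then ⁅z i, ω x (hprep ⁅z (hdel i k), z (hdel i l)⁆ (z ∘ (hdel i ∘ (hdel l ∘ hdel k))))⁆ else 0) + (∑ i ∈ Finset.range (m+2), ∑ j ∈ Finset.range (m+2), if i < j then (∑ k ∈ Finset.range m, ⁅z (hdel j (hdel i k)), ω x (hprep ⁅z i, z j⁆ (z ∘ (hdel j ∘ (hdel i ∘ hdel k))))⁆) else 0) = 0 := by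
    have e1 : (∑ i ∈ Finset.range (m+2), ∑ k ∈ Finset.range (m+1), ∑ l ∈ Finset.range (m+1), if k < l then ⁅z i, ω x (hprep ⁅z (hdel i k), z (hdel i l)⁆ (z ∘ (hdel i ∘ (hdel l ∘ hdel k))))⁆ else 0)
        = ∑ a ∈ Finset.range (m+2), ∑ b ∈ Finset.range (m+2), ∑ c ∈ Finset.range (m+2), if a < b ∧ b < c
            then ⁅z c, ω x (hprep ⁅z a, z b⁆ (tdel z c a b))⁆ + ⁅z b, ω x (hprep ⁅z a, z c⁆ (tdel z b a c))⁆ + ⁅z a, ω x (hprep ⁅z b, z c⁆ (tdel z a b c))⁆ else 0 := by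
      have stepi : ∀ i ∈ Finset.range (m+2), (∑ k ∈ Finset.range (m+1), ∑ l ∈ Finset.range (m+1), if k < l then ⁅z i, ω x (hprep ⁅z (hdel i k), z (hdel i l)⁆ (z ∘ (hdel i ∘ (hdel l ∘ hdel k))))⁆ else 0)
          = ∑ q ∈ Finset.range (m+2), ∑ r ∈ Finset.range (m+2), if q < r ∧ ¬ i = q ∧ ¬ i = r then ⁅z i, ω x (hprep ⁅z q, z r⁆ (tdel z i q r))⁆ else 0 := by
        intro i hi
        have hi' := Finset.mem_range.mp hi
        have ptw : ∀ k ∈ Finset.range (m+1), ∀ l ∈ Finset.range (m+1), (if k < l then ⁅z i, ω x (hprep ⁅z (hdel i k), z (hdel i l)⁆ (z ∘ (hdel i ∘ (hdel l ∘ hdel k))))⁆ else 0)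
            = (if hdel i k < hdel i l then ⁅z i, ω x (hprep ⁅z (hdel i k), z (hdel i l)⁆ (tdel z i (hdel i k) (hdel i l)))⁆ else 0) := by
          intro k _ l _
          by_cases h : k < l
          · rw [if_pos h, if_pos ((hdel_lt_iff i k l).mpr h), tdel_eq z i k l h]
          · rw [if_neg h, if_neg (fun hc => h ((hdel_lt_iff i k l).mp hc))]
        rw [Finset.sum_congr rfl (fun k hk => Finset.sum_congr rfl (ptw k hk))]
        rw [Finset.sum_congr rfl (fun k _ => sum_hdel (m+1) i (by omega)
          (fun r => if hdel i k < r then ⁅z i, ω x (hprep ⁅z (hdel i k), z r⁆ (tdel z i (hdel i k) r))⁆ else 0))]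
        rw [sum_hdel (m+1) i (by omega)
          (fun q => ∑ r ∈ Finset.range (m+1+1), if i = r then 0 else
            if q < r then ⁅z i, ω x (hprep ⁅z q, z r⁆ (tdel z i q r))⁆ else 0)]
        simp only [show m+1+1 = m+2 from rfl]
        refine Finset.sum_congr rfl (fun q _ => ?_)
        rw [ite_sum_zero]
        refine Finset.sum_congr rfl (fun r _ => ?_)
        split_ifs <;> first | rfl | omega
      rw [Finset.sum_congr rfl stepi, sum_comm3,
        sum_triple_split (m+2) (fun a b c => ⁅z c, ω x (hprep ⁅z a, z b⁆ (tdel z c a b))⁆)]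
    have e2 : (∑ i ∈ Finset.range (m+2), ∑ j ∈ Finset.range (m+2), if i < j then (∑ k ∈ Finset.range m, ⁅z (hdel j (hdel i k)), ω x (hprep ⁅z i, z j⁆ (z ∘ (hdel j ∘ (hdel i ∘ hdel k))))⁆) else 0)
        = ∑ a ∈ Finset.range (m+2), ∑ b ∈ Finset.range (m+2), ∑ c ∈ Finset.range (m+2), if a < b ∧ b < c
            then ⁅z c, ω x (hprep ⁅z a, z b⁆ (tdelp z a b c))⁆ + ⁅z b, ω x (hprep ⁅z a, z c⁆ (tdelp z a c b))⁆ + ⁅z a, ω x (hprep ⁅z b, z c⁆ (tdelp z b c a))⁆ else 0 := by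
      have stepij : ∀ i ∈ Finset.range (m+2), ∀ j ∈ Finset.range (m+2), (if i < j then (∑ k ∈ Finset.range m, ⁅z (hdel j (hdel i k)), ω x (hprep ⁅z i, z j⁆ (z ∘ (hdel j ∘ (hdel i ∘ hdel k))))⁆) else 0)
          = ∑ p ∈ Finset.range (m+2), if i < j ∧ ¬ p = i ∧ ¬ p = j then ⁅z p, ω x (hprep ⁅z i, z j⁆ (tdelp z i j p))⁆ else 0 := by
        intro i hi j hj
        have hi' := Finset.mem_range.mp hi
        have hj' := Finset.mem_range.mp hj
        by_cases h : i < j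
        · rw [if_pos h]
          have ptw : ∀ k ∈ Finset.range m, ⁅z (hdel j (hdel i k)), ω x (hprep ⁅z i, z j⁆ (z ∘ (hdel j ∘ (hdel i ∘ hdel k))))⁆ = ⁅z (hdel j (hdel i k)), ω x (hprep ⁅z i, z j⁆ (tdelp z i j (hdel j (hdel i k))))⁆ :=
            fun k _ => by rw [tdelp_eq z i j k h]
          rw [Finset.sum_congr rfl ptw,
            sum_hdel m i (by omega) (fun t => ⁅z (hdel j t), ω x (hprep ⁅z i, z j⁆ (tdelp z i j (hdel j t)))⁆)]
          have ptw2 : ∀ t ∈ Finset.range (m+1), (if i = t then 0 else ⁅z (hdel j t), ω x (hprep ⁅z i, z j⁆ (tdelp z i j (hdel j t)))⁆)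
              = (if i = hdel j t then 0 else ⁅z (hdel j t), ω x (hprep ⁅z i, z j⁆ (tdelp z i j (hdel j t)))⁆) := by
            intro t _
            have hiff : i = hdel j t ↔ i = t := by
              rw [eq_comm, hdel_hdel_eq_iff h, eq_comm]
            by_cases ht : i = t
            · rw [if_pos ht, if_pos (hiff.mpr ht)]
            · rw [if_neg ht, if_neg (fun hc => ht (hiff.mp hc))]
          rw [Finset.sum_congr rfl ptw2,
            sum_hdel (m+1) j (by omega) (fun p => if i = p then 0 else ⁅z p, ω x (hprep ⁅z i, z j⁆ (tdelp z i j p))⁆)]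
          simp only [show m+1+1 = m+2 from rfl]
          refine Finset.sum_congr rfl (fun p _ => ?_)
          split_ifs <;> first | rfl | omega
        · rw [if_neg h]
          exact (Finset.sum_eq_zero (fun p _ => if_neg (fun hc => h hc.1))).symm
      rw [Finset.sum_congr rfl (fun i hi => Finset.sum_congr rfl (stepij i hi)),
        sum_triple_split (m+2) (fun a b c => ⁅z c, ω x (hprep ⁅z a, z b⁆ (tdelp z a b c))⁆)]
    rw [e1, e2]
    simp only [← Finset.sum_add_distrib, ite_add_ite, add_zero]
    refine Finset.sum_eq_zero (fun a _ => Finset.sum_eq_zero (fun b _ =>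
      Finset.sum_eq_zero (fun c _ => ?_)))
    by_cases h : a < b ∧ b < c
    · simp only [if_pos h]
      rw [tdel_s3 z h.1 h.2, tdel_s2 z h.1 h.2, tdel_s1 z h.1 h.2,
        tdelp_s1 z h.1 h.2, tdelp_s2 z h.1 h.2, tdelp_s3 z h.1 h.2]
      exact chM _
    · simp only [if_neg h]
  have hg9 : (∑ i ∈ Finset.range (m+2), φ (hprep ⁅sq x, z i⁆ (z ∘ hdel i))) + (∑ i ∈ Finset.range (m+2), φ (hprep ⁅⁅x, z i⁆, x⁆ (z ∘ hdel i))) = 0 := by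
    simp only [← Finset.sum_add_distrib]
    refine Finset.sum_eq_zero (fun i _ => ?_)
    rw [h2x (z i)]
    exact chM _
  have hg10 : (∑ i ∈ Finset.range (m+2), ∑ j ∈ Finset.range (m+2), if i < j then φ (hprep ⁅z i, z j⁆ (hprep (sq x) (z ∘ (hdel j ∘ hdel i)))) else 0) + (∑ i ∈ Finset.range (m+2), ∑ j ∈ Finset.range (m+2), if i < j then (φ (hprep (sq x) (hprep ⁅z i, z j⁆ (z ∘ (hdel j ∘ hdel i))))) else 0) = 0 := by
    simp only [← Finset.sum_add_distrib, ite_add_ite, add_zero]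
    refine Finset.sum_eq_zero (fun i _ => Finset.sum_eq_zero (fun j _ => ?_))
    by_cases h : i < j
    · simp only [if_pos h]
      rw [φsw01 (sq x) ⁅z i, z j⁆ (z ∘ (hdel j ∘ hdel i))]
      exact chM _
    · simp only [if_neg h]
  have hg11 : (∑ i ∈ Finset.range (m+2), ∑ k ∈ Finset.range (m+1), φ (hprep ⁅⁅x, z i⁆, z (hdel i k)⁆ (hprep x (z ∘ (hdel i ∘ hdel k))))) + (∑ i ∈ Finset.range (m+2), ∑ j ∈ Finset.range (m+2), if i < j then (φ (hprep ⁅x, ⁅z i, z j⁆⁆ (hprep x (z ∘ (hdel j ∘ hdel i))))) else 0) = 0 := by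
    have e1 : (∑ i ∈ Finset.range (m+2), ∑ k ∈ Finset.range (m+1), φ (hprep ⁅⁅x, z i⁆, z (hdel i k)⁆ (hprep x (z ∘ (hdel i ∘ hdel k)))))
        = ∑ i ∈ Finset.range (m+2), ∑ q ∈ Finset.range (m+2), if i = q then 0 else φ (hprep ⁅⁅x, z i⁆, z q⁆ (hprep x (ddel z i q))) := by
      refine Finset.sum_congr rfl (fun i hi => ?_)
      have inner : ∀ k ∈ Finset.range (m+1), φ (hprep ⁅⁅x, z i⁆, z (hdel i k)⁆ (hprep x (z ∘ (hdel i ∘ hdel k))))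
          = φ (hprep ⁅⁅x, z i⁆, z (hdel i k)⁆ (hprep x (ddel z i (hdel i k)))) :=
        fun k _ => by rw [ddel_eq z i k]
      rw [Finset.sum_congr rfl inner,
        sum_hdel (m+1) i (by have := Finset.mem_range.mp hi; omega)
          (fun q => φ (hprep ⁅⁅x, z i⁆, z q⁆ (hprep x (ddel z i q))))]
      try simp only [show m+1+1 = m+2 from rfl]
    have e2 : (∑ i ∈ Finset.range (m+2), ∑ j ∈ Finset.range (m+2), if i < j then φ (hprep ⁅x, ⁅z i, z j⁆⁆ (hprep x (z ∘ (hdel j ∘ hdel i)))) else 0)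
        = ∑ i ∈ Finset.range (m+2), ∑ j ∈ Finset.range (m+2), if i < j then φ (hprep ⁅x, ⁅z i, z j⁆⁆ (hprep x (ddel z i j))) else 0 := by
      refine Finset.sum_congr rfl (fun i _ => Finset.sum_congr rfl (fun j _ => ?_))
      by_cases h : i < j
      · simp only [if_pos h]; rw [ddel_of_lt z h]
      · simp only [if_neg h]
    rw [e1, e2, sum_pair_split (m+2) (fun i q => φ (hprep ⁅⁅x, z i⁆, z q⁆ (hprep x (ddel z i q))))]
    simp only [← Finset.sum_add_distrib, ite_add_ite, add_zero]
    refine Finset.sum_eq_zero (fun i _ => Finset.sum_eq_zero (fun j _ => ?_))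
    by_cases h : i < j
    · simp only [if_pos h]
      rw [ddel_comm z j i, ← φadd, ← φadd, jL x (z i) (z j)]
      exact φzero _
    · simp only [if_neg h]
  have hg12 : (∑ i ∈ Finset.range (m+2), ∑ k ∈ Finset.range (m+1), φ (hprep ⁅x, z (hdel i k)⁆ (hprep ⁅x, z i⁆ (z ∘ (hdel i ∘ hdel k))))) = 0 := by
    have e1 : (∑ i ∈ Finset.range (m+2), ∑ k ∈ Finset.range (m+1), φ (hprep ⁅x, z (hdel i k)⁆ (hprep ⁅x, z i⁆ (z ∘ (hdel i ∘ hdel k)))))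
        = ∑ i ∈ Finset.range (m+2), ∑ q ∈ Finset.range (m+2), if i = q then 0 else φ (hprep ⁅x, z q⁆ (hprep ⁅x, z i⁆ (ddel z i q))) := by
      refine Finset.sum_congr rfl (fun i hi => ?_)
      have inner : ∀ k ∈ Finset.range (m+1), φ (hprep ⁅x, z (hdel i k)⁆ (hprep ⁅x, z i⁆ (z ∘ (hdel i ∘ hdel k))))
          = φ (hprep ⁅x, z (hdel i k)⁆ (hprep ⁅x, z i⁆ (ddel z i (hdel i k)))) :=
        fun k _ => by rw [ddel_eq z i k]
      rw [Finset.sum_congr rfl inner,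
        sum_hdel (m+1) i (by have := Finset.mem_range.mp hi; omega)
          (fun q => φ (hprep ⁅x, z q⁆ (hprep ⁅x, z i⁆ (ddel z i q))))]
      try simp only [show m+1+1 = m+2 from rfl]
    rw [e1, sum_pair_split (m+2) (fun i q => φ (hprep ⁅x, z q⁆ (hprep ⁅x, z i⁆ (ddel z i q))))]
    refine Finset.sum_eq_zero (fun i _ => Finset.sum_eq_zero (fun j _ => ?_))
    by_cases h : i < j
    · simp only [if_pos h]
      rw [ddel_comm z j i, φsw01 ⁅x, z i⁆ ⁅x, z j⁆ (ddel z i j)]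
      exact chM _
    · simp only [if_neg h]
  have hg13 : (∑ i ∈ Finset.range (m+2), ∑ k ∈ Finset.range (m+1), ∑ l ∈ Finset.range (m+1), if k < l then φ (hprep ⁅z (hdel i k), z (hdel i l)⁆ (hprep ⁅x, z i⁆ (hprep x (z ∘ (hdel i ∘ (hdel l ∘ hdel k)))))) else 0) + (∑ i ∈ Finset.range (m+2), ∑ j ∈ Finset.range (m+2), if i < j then (∑ k ∈ Finset.range m, φ (hprep ⁅x, z (hdel j (hdel i k))⁆ (hprep x (hprep ⁅z i, z j⁆ (z ∘ (hdel j ∘ (hdel i ∘ hdel k))))))) else 0) = 0 := by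
    have e1 : (∑ i ∈ Finset.range (m+2), ∑ k ∈ Finset.range (m+1), ∑ l ∈ Finset.range (m+1), if k < l then φ (hprep ⁅z (hdel i k), z (hdel i l)⁆ (hprep ⁅x, z i⁆ (hprep x (z ∘ (hdel i ∘ (hdel l ∘ hdel k)))))) else 0)
        = ∑ a ∈ Finset.range (m+2), ∑ b ∈ Finset.range (m+2), ∑ c ∈ Finset.range (m+2), if a < b ∧ b < c
            then φ (hprep ⁅z a, z b⁆ (hprep ⁅x, z c⁆ (hprep x (tdel z c a b)))) + φ (hprep ⁅z a, z c⁆ (hprep ⁅x, z b⁆ (hprep x (tdel z b a c)))) + φ (hprep ⁅z b, z c⁆ (hprep ⁅x, z a⁆ (hprep x (tdel z a b c)))) else 0 := by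
      have stepi : ∀ i ∈ Finset.range (m+2), (∑ k ∈ Finset.range (m+1), ∑ l ∈ Finset.range (m+1), if k < l then φ (hprep ⁅z (hdel i k), z (hdel i l)⁆ (hprep ⁅x, z i⁆ (hprep x (z ∘ (hdel i ∘ (hdel l ∘ hdel k)))))) else 0)
          = ∑ q ∈ Finset.range (m+2), ∑ r ∈ Finset.range (m+2), if q < r ∧ ¬ i = q ∧ ¬ i = r then φ (hprep ⁅z q, z r⁆ (hprep ⁅x, z i⁆ (hprep x (tdel z i q r)))) else 0 := by
        intro i hi
        have hi' := Finset.mem_range.mp hi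
        have ptw : ∀ k ∈ Finset.range (m+1), ∀ l ∈ Finset.range (m+1), (if k < l then φ (hprep ⁅z (hdel i k), z (hdel i l)⁆ (hprep ⁅x, z i⁆ (hprep x (z ∘ (hdel i ∘ (hdel l ∘ hdel k)))))) else 0)
            = (if hdel i k < hdel i l then φ (hprep ⁅z (hdel i k), z (hdel i l)⁆ (hprep ⁅x, z i⁆ (hprep x (tdel z i (hdel i k) (hdel i l))))) else 0) := by
          intro k _ l _
          by_cases h : k < l
          · rw [if_pos h, if_pos ((hdel_lt_iff i k l).mpr h), tdel_eq z i k l h]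
          · rw [if_neg h, if_neg (fun hc => h ((hdel_lt_iff i k l).mp hc))]
        rw [Finset.sum_congr rfl (fun k hk => Finset.sum_congr rfl (ptw k hk))]
        rw [Finset.sum_congr rfl (fun k _ => sum_hdel (m+1) i (by omega)
          (fun r => if hdel i k < r then φ (hprep ⁅z (hdel i k), z r⁆ (hprep ⁅x, z i⁆ (hprep x (tdel z i (hdel i k) r)))) else 0))]
        rw [sum_hdel (m+1) i (by omega)
          (fun q => ∑ r ∈ Finset.range (m+1+1), if i = r then 0 else
            if q < r then φ (hprep ⁅z q, z r⁆ (hprep ⁅x, z i⁆ (hprep x (tdel z i q r)))) else 0)]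
        simp only [show m+1+1 = m+2 from rfl]
        refine Finset.sum_congr rfl (fun q _ => ?_)
        rw [ite_sum_zero]
        refine Finset.sum_congr rfl (fun r _ => ?_)
        split_ifs <;> first | rfl | omega
      rw [Finset.sum_congr rfl stepi, sum_comm3,
        sum_triple_split (m+2) (fun a b c => φ (hprep ⁅z a, z b⁆ (hprep ⁅x, z c⁆ (hprep x (tdel z c a b)))))]
    have e2 : (∑ i ∈ Finset.range (m+2), ∑ j ∈ Finset.range (m+2), if i < j then (∑ k ∈ Finset.range m, φ (hprep ⁅x, z (hdel j (hdel i k))⁆ (hprep x (hprep ⁅z i, z j⁆ (z ∘ (hdel j ∘ (hdel i ∘ hdel k))))))) else 0)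
        = ∑ a ∈ Finset.range (m+2), ∑ b ∈ Finset.range (m+2), ∑ c ∈ Finset.range (m+2), if a < b ∧ b < c
            then φ (hprep ⁅x, z c⁆ (hprep x (hprep ⁅z a, z b⁆ (tdelp z a b c)))) + φ (hprep ⁅x, z b⁆ (hprep x (hprep ⁅z a, z c⁆ (tdelp z a c b)))) + φ (hprep ⁅x, z a⁆ (hprep x (hprep ⁅z b, z c⁆ (tdelp z b c a)))) else 0 := by
      have stepij : ∀ i ∈ Finset.range (m+2), ∀ j ∈ Finset.range (m+2), (if i < j then (∑ k ∈ Finset.range m, φ (hprep ⁅x, z (hdel j (hdel i k))⁆ (hprep x (hprep ⁅z i, z j⁆ (z ∘ (hdel j ∘ (hdel i ∘ hdel k))))))) else 0)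
          = ∑ p ∈ Finset.range (m+2), if i < j ∧ ¬ p = i ∧ ¬ p = j then φ (hprep ⁅x, z p⁆ (hprep x (hprep ⁅z i, z j⁆ (tdelp z i j p)))) else 0 := by
        intro i hi j hj
        have hi' := Finset.mem_range.mp hi
        have hj' := Finset.mem_range.mp hj
        by_cases h : i < j
        · rw [if_pos h]
          have ptw : ∀ k ∈ Finset.range m, φ (hprep ⁅x, z (hdel j (hdel i k))⁆ (hprep x (hprep ⁅z i, z j⁆ (z ∘ (hdel j ∘ (hdel i ∘ hdel k)))))) = φ (hprep ⁅x, z (hdel j (hdel i k))⁆ (hprep x (hprep ⁅z i, z j⁆ (tdelp z i j (hdel j (hdel i k)))))) :=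
            fun k _ => by rw [tdelp_eq z i j k h]
          rw [Finset.sum_congr rfl ptw,
            sum_hdel m i (by omega) (fun t => φ (hprep ⁅x, z (hdel j t)⁆ (hprep x (hprep ⁅z i, z j⁆ (tdelp z i j (hdel j t))))))]
          have ptw2 : ∀ t ∈ Finset.range (m+1), (if i = t then 0 else φ (hprep ⁅x, z (hdel j t)⁆ (hprep x (hprep ⁅z i, z j⁆ (tdelp z i j (hdel j t))))))
              = (if i = hdel j t then 0 else φ (hprep ⁅x, z (hdel j t)⁆ (hprep x (hprep ⁅z i, z j⁆ (tdelp z i j (hdel j t)))))) := by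
            intro t _
            have hiff : i = hdel j t ↔ i = t := by
              rw [eq_comm, hdel_hdel_eq_iff h, eq_comm]
            by_cases ht : i = t
            · rw [if_pos ht, if_pos (hiff.mpr ht)]
            · rw [if_neg ht, if_neg (fun hc => ht (hiff.mp hc))]
          rw [Finset.sum_congr rfl ptw2,
            sum_hdel (m+1) j (by omega) (fun p => if i = p then 0 else φ (hprep ⁅x, z p⁆ (hprep x (hprep ⁅z i, z j⁆ (tdelp z i j p)))))]
          simp only [show m+1+1 = m+2 from rfl]
          refine Finset.sum_congr rfl (fun p _ => ?_)
          split_ifs <;> first | rfl | omega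
        · rw [if_neg h]
          exact (Finset.sum_eq_zero (fun p _ => if_neg (fun hc => h hc.1))).symm
      rw [Finset.sum_congr rfl (fun i hi => Finset.sum_congr rfl (stepij i hi)),
        sum_triple_split (m+2) (fun a b c => φ (hprep ⁅x, z c⁆ (hprep x (hprep ⁅z a, z b⁆ (tdelp z a b c)))))]
    rw [e1, e2]
    simp only [← Finset.sum_add_distrib, ite_add_ite, add_zero]
    refine Finset.sum_eq_zero (fun a _ => Finset.sum_eq_zero (fun b _ =>
      Finset.sum_eq_zero (fun c hc => ?_)))
    by_cases h : a < b ∧ b < c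
    · simp only [if_pos h]
      have hm : 0 < m := by have := Finset.mem_range.mp hc; omega
      rw [tdel_s3 z h.1 h.2, tdel_s2 z h.1 h.2, tdel_s1 z h.1 h.2,
        tdelp_s1 z h.1 h.2, tdelp_s2 z h.1 h.2, tdelp_s3 z h.1 h.2]
      rw [φsw12 hm ⁅x, z c⁆ x ⁅z a, z b⁆ (z ∘ (hdel c ∘ (hdel b ∘ hdel a))), φsw01 ⁅x, z c⁆ ⁅z a, z b⁆ (hprep x (z ∘ (hdel c ∘ (hdel b ∘ hdel a))))]
      rw [φsw12 hm ⁅x, z b⁆ x ⁅z a, z c⁆ (z ∘ (hdel c ∘ (hdel b ∘ hdel a))), φsw01 ⁅x, z b⁆ ⁅z a, z c⁆ (hprep x (z ∘ (hdel c ∘ (hdel b ∘ hdel a))))]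
      rw [φsw12 hm ⁅x, z a⁆ x ⁅z b, z c⁆ (z ∘ (hdel c ∘ (hdel b ∘ hdel a))), φsw01 ⁅x, z a⁆ ⁅z b, z c⁆ (hprep x (z ∘ (hdel c ∘ (hdel b ∘ hdel a))))]
      exact chM _
    · simp only [if_neg h]
  have hg14 : (∑ i ∈ Finset.range (m+2), ∑ j ∈ Finset.range (m+2), if i < j then (∑ k ∈ Finset.range m, ω x (hprep ⁅⁅z i, z j⁆, z (hdel j (hdel i k))⁆ (z ∘ (hdel j ∘ (hdel i ∘ hdel k))))) else 0) = 0 := by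
    have e1 : (∑ i ∈ Finset.range (m+2), ∑ j ∈ Finset.range (m+2), if i < j then (∑ k ∈ Finset.range m, ω x (hprep ⁅⁅z i, z j⁆, z (hdel j (hdel i k))⁆ (z ∘ (hdel j ∘ (hdel i ∘ hdel k))))) else 0)
        = ∑ a ∈ Finset.range (m+2), ∑ b ∈ Finset.range (m+2), ∑ c ∈ Finset.range (m+2), if a < b ∧ b < c
            then ω x (hprep ⁅⁅z a, z b⁆, z c⁆ (tdelp z a b c)) + ω x (hprep ⁅⁅z a, z c⁆, z b⁆ (tdelp z a c b)) + ω x (hprep ⁅⁅z b, z c⁆, z a⁆ (tdelp z b c a)) else 0 := by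
      have stepij : ∀ i ∈ Finset.range (m+2), ∀ j ∈ Finset.range (m+2), (if i < j then (∑ k ∈ Finset.range m, ω x (hprep ⁅⁅z i, z j⁆, z (hdel j (hdel i k))⁆ (z ∘ (hdel j ∘ (hdel i ∘ hdel k))))) else 0)
          = ∑ p ∈ Finset.range (m+2), if i < j ∧ ¬ p = i ∧ ¬ p = j then ω x (hprep ⁅⁅z i, z j⁆, z p⁆ (tdelp z i j p)) else 0 := by
        intro i hi j hj
        have hi' := Finset.mem_range.mp hi
        have hj' := Finset.mem_range.mp hj
        by_cases h : i < j
        · rw [if_pos h]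
          have ptw : ∀ k ∈ Finset.range m, ω x (hprep ⁅⁅z i, z j⁆, z (hdel j (hdel i k))⁆ (z ∘ (hdel j ∘ (hdel i ∘ hdel k)))) = ω x (hprep ⁅⁅z i, z j⁆, z (hdel j (hdel i k))⁆ (tdelp z i j (hdel j (hdel i k)))) :=
            fun k _ => by rw [tdelp_eq z i j k h]
          rw [Finset.sum_congr rfl ptw,
            sum_hdel m i (by omega) (fun t => ω x (hprep ⁅⁅z i, z j⁆, z (hdel j t)⁆ (tdelp z i j (hdel j t))))]
          have ptw2 : ∀ t ∈ Finset.range (m+1), (if i = t then 0 else ω x (hprep ⁅⁅z i, z j⁆, z (hdel j t)⁆ (tdelp z i j (hdel j t))))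
              = (if i = hdel j t then 0 else ω x (hprep ⁅⁅z i, z j⁆, z (hdel j t)⁆ (tdelp z i j (hdel j t)))) := by
            intro t _
            have hiff : i = hdel j t ↔ i = t := by
              rw [eq_comm, hdel_hdel_eq_iff h, eq_comm]
            by_cases ht : i = t
            · rw [if_pos ht, if_pos (hiff.mpr ht)]
            · rw [if_neg ht, if_neg (fun hc => ht (hiff.mp hc))]
          rw [Finset.sum_congr rfl ptw2,
            sum_hdel (m+1) j (by omega) (fun p => if i = p then 0 else ω x (hprep ⁅⁅z i, z j⁆, z p⁆ (tdelp z i j p)))]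
          simp only [show m+1+1 = m+2 from rfl]
          refine Finset.sum_congr rfl (fun p _ => ?_)
          split_ifs <;> first | rfl | omega
        · rw [if_neg h]
          exact (Finset.sum_eq_zero (fun p _ => if_neg (fun hc => h hc.1))).symm
      rw [Finset.sum_congr rfl (fun i hi => Finset.sum_congr rfl (stepij i hi)),
        sum_triple_split (m+2) (fun a b c => ω x (hprep ⁅⁅z a, z b⁆, z c⁆ (tdelp z a b c)))]
    rw [e1]
    refine Finset.sum_eq_zero (fun a _ => Finset.sum_eq_zero (fun b _ =>
      Finset.sum_eq_zero (fun c hc => ?_)))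
    by_cases h : a < b ∧ b < c
    · simp only [if_pos h]
      have hm : 0 < m := by have := Finset.mem_range.mp hc; omega
      rw [tdelp_s1 z h.1 h.2, tdelp_s2 z h.1 h.2, tdelp_s3 z h.1 h.2]
      rw [← ωadd hm, ← ωadd hm, jL4 (z a) (z b) (z c), ωzero hm]
    · simp only [if_neg h]
  have hg15 : (∑ i ∈ Finset.range (m+2), ∑ j ∈ Finset.range (m+2), if i < j then (∑ k ∈ Finset.range m, ∑ l ∈ Finset.range m, if k < l then ω x (hprep ⁅z (hdel j (hdel i k)), z (hdel j (hdel i l))⁆ (hprep ⁅z i, z j⁆ (z ∘ (hdel j ∘ (hdel i ∘ (hdel l ∘ hdel k)))))) else 0) else 0) = 0 := by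
    have e1 : (∑ i ∈ Finset.range (m+2), ∑ j ∈ Finset.range (m+2), if i < j then (∑ k ∈ Finset.range m, ∑ l ∈ Finset.range m,
          if k < l then ω x (hprep ⁅z (hdel j (hdel i k)), z (hdel j (hdel i l))⁆ (hprep ⁅z i, z j⁆ (z ∘ (hdel j ∘ (hdel i ∘ (hdel l ∘ hdel k)))))) else 0) else 0)
        = ∑ i ∈ Finset.range (m+2), ∑ j ∈ Finset.range (m+2), ∑ p ∈ Finset.range (m+2), ∑ q ∈ Finset.range (m+2),
            if i < j ∧ p < q ∧ ¬ p = i ∧ ¬ p = j ∧ ¬ q = i ∧ ¬ q = j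
              then ω x (hprep ⁅z p, z q⁆ (hprep ⁅z i, z j⁆ (qdel z i j p q))) else 0 := by
      have stepij : ∀ i ∈ Finset.range (m+2), ∀ j ∈ Finset.range (m+2), (if i < j then (∑ k ∈ Finset.range m, ∑ l ∈ Finset.range m,
            if k < l then ω x (hprep ⁅z (hdel j (hdel i k)), z (hdel j (hdel i l))⁆ (hprep ⁅z i, z j⁆ (z ∘ (hdel j ∘ (hdel i ∘ (hdel l ∘ hdel k)))))) else 0) else 0)
          = ∑ p ∈ Finset.range (m+2), ∑ q ∈ Finset.range (m+2),
              if i < j ∧ p < q ∧ ¬ p = i ∧ ¬ p = j ∧ ¬ q = i ∧ ¬ q = j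
                then ω x (hprep ⁅z p, z q⁆ (hprep ⁅z i, z j⁆ (qdel z i j p q))) else 0 := by
        intro i hi j hj
        have hi' := Finset.mem_range.mp hi
        have hj' := Finset.mem_range.mp hj
        by_cases h : i < j
        · rw [if_pos h]
          have ptw : ∀ k ∈ Finset.range m, ∀ l ∈ Finset.range m, (if k < l then ω x (hprep ⁅z (hdel j (hdel i k)), z (hdel j (hdel i l))⁆ (hprep ⁅z i, z j⁆ (z ∘ (hdel j ∘ (hdel i ∘ (hdel l ∘ hdel k)))))) else 0)
              = (if hdel j (hdel i k) < hdel j (hdel i l)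
                  then ω x (hprep ⁅z (hdel j (hdel i k)), z (hdel j (hdel i l))⁆ (hprep ⁅z i, z j⁆ (qdel z i j (hdel j (hdel i k)) (hdel j (hdel i l))))) else 0) := by
            intro k _ l _
            by_cases h2 : k < l
            · rw [if_pos h2, if_pos ((hdel_lt_iff j _ _).mpr ((hdel_lt_iff i k l).mpr h2)),
                qdel_eq z i j k l h h2]
            · rw [if_neg h2,
                if_neg (fun hc => h2 ((hdel_lt_iff i k l).mp ((hdel_lt_iff j _ _).mp hc)))]
          rw [Finset.sum_congr rfl (fun k hk => Finset.sum_congr rfl (ptw k hk))]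
          rw [Finset.sum_congr rfl (fun k _ => sum_hdel m i (by omega)
            (fun t => if hdel j (hdel i k) < hdel j t
              then ω x (hprep ⁅z (hdel j (hdel i k)), z (hdel j t)⁆ (hprep ⁅z i, z j⁆ (qdel z i j (hdel j (hdel i k)) (hdel j t)))) else 0))]
          have ptw2 : ∀ k ∈ Finset.range m, ∀ t ∈ Finset.range (m+1),
              (if i = t then 0 else (if hdel j (hdel i k) < hdel j t
                then ω x (hprep ⁅z (hdel j (hdel i k)), z (hdel j t)⁆ (hprep ⁅z i, z j⁆ (qdel z i j (hdel j (hdel i k)) (hdel j t)))) else 0))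
              = (if i = hdel j t then 0 else (if hdel j (hdel i k) < hdel j t
                then ω x (hprep ⁅z (hdel j (hdel i k)), z (hdel j t)⁆ (hprep ⁅z i, z j⁆ (qdel z i j (hdel j (hdel i k)) (hdel j t)))) else 0)) := by
            intro k _ t _
            have hiff : i = hdel j t ↔ i = t := by
              rw [eq_comm, hdel_hdel_eq_iff h, eq_comm]
            by_cases ht : i = t
            · rw [if_pos ht, if_pos (hiff.mpr ht)]
            · rw [if_neg ht, if_neg (fun hc => ht (hiff.mp hc))]
          rw [Finset.sum_congr rfl (fun k hk => Finset.sum_congr rfl (ptw2 k hk))]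
          rw [Finset.sum_congr rfl (fun k _ => sum_hdel (m+1) j (by omega)
            (fun q => if i = q then 0 else (if hdel j (hdel i k) < q
              then ω x (hprep ⁅z (hdel j (hdel i k)), z q⁆ (hprep ⁅z i, z j⁆ (qdel z i j (hdel j (hdel i k)) q))) else 0)))]
          simp only [show m+1+1 = m+2 from rfl]
          rw [sum_hdel m i (by omega) (fun s => ∑ q ∈ Finset.range (m+2), if j = q then 0 else
            (if i = q then 0 else (if hdel j s < q then ω x (hprep ⁅z (hdel j s), z q⁆ (hprep ⁅z i, z j⁆ (qdel z i j (hdel j s) q))) else 0)))]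
          have ptw3 : ∀ s ∈ Finset.range (m+1),
              (if i = s then 0 else (∑ q ∈ Finset.range (m+2), if j = q then 0 else
                (if i = q then 0 else (if hdel j s < q then ω x (hprep ⁅z (hdel j s), z q⁆ (hprep ⁅z i, z j⁆ (qdel z i j (hdel j s) q))) else 0))))
              = (if i = hdel j s then 0 else (∑ q ∈ Finset.range (m+2), if j = q then 0 else
                (if i = q then 0 else (if hdel j s < q then ω x (hprep ⁅z (hdel j s), z q⁆ (hprep ⁅z i, z j⁆ (qdel z i j (hdel j s) q))) else 0)))) := by
            intro s _
            have hiff : i = hdel j s ↔ i = s := by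
              rw [eq_comm, hdel_hdel_eq_iff h, eq_comm]
            by_cases ht : i = s
            · rw [if_pos ht, if_pos (hiff.mpr ht)]
            · rw [if_neg ht, if_neg (fun hc => ht (hiff.mp hc))]
          rw [Finset.sum_congr rfl ptw3]
          rw [sum_hdel (m+1) j (by omega) (fun p => if i = p then 0 else
            (∑ q ∈ Finset.range (m+2), if j = q then 0 else
              (if i = q then 0 else (if p < q then ω x (hprep ⁅z p, z q⁆ (hprep ⁅z i, z j⁆ (qdel z i j p q))) else 0))))]
          simp only [show m+1+1 = m+2 from rfl]
          refine Finset.sum_congr rfl (fun p _ => ?_)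
          simp only [ite_sum_zero]
          refine Finset.sum_congr rfl (fun q _ => ?_)
          split_ifs <;> first | rfl | omega
        · rw [if_neg h]
          exact (Finset.sum_eq_zero (fun p _ => Finset.sum_eq_zero (fun q _ =>
            if_neg (fun hc => h hc.1)))).symm
      rw [Finset.sum_congr rfl (fun i hi => Finset.sum_congr rfl (stepij i hi))]
    rw [e1, sum_quad_split (m+2) (fun i j p q => ω x (hprep ⁅z p, z q⁆ (hprep ⁅z i, z j⁆ (qdel z i j p q))))]
    refine Finset.sum_eq_zero (fun i hi => Finset.sum_eq_zero (fun j hj =>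
      Finset.sum_eq_zero (fun p hp => Finset.sum_eq_zero (fun q hq => ?_))))
    by_cases h : i < j ∧ p < q ∧ ¬ p = i ∧ ¬ p = j ∧ ¬ q = i ∧ ¬ q = j ∧ i < p
    · simp only [if_pos h]
      obtain ⟨h1, h2, h3, h4, h5, h6, h7⟩ := h
      have hi' := Finset.mem_range.mp hi
      have hj' := Finset.mem_range.mp hj
      have hp' := Finset.mem_range.mp hp
      have hq' := Finset.mem_range.mp hq
      have hm : 1 < m := by omega
      rw [qdel_swap z h1 h2 h3 h4 h5 h6,
        ωsw01 hm ⁅z i, z j⁆ ⁅z p, z q⁆ (qdel z i j p q)]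
      exact chM _
    · simp only [if_neg h]
  have reorg : ((⁅x, ⁅x, φ z⁆⁆) + (∑ i ∈ Finset.range (m+2), ⁅x, ⁅z i, φ (hprep x (z ∘ hdel i))⁆⁆) + (∑ i ∈ Finset.range (m+2), ⁅x, φ (hprep ⁅x, z i⁆ (z ∘ hdel i))⁆) + (∑ i ∈ Finset.range (m+2), ∑ j ∈ Finset.range (m+2), if i < j then ⁅x, φ (hprep ⁅z i, z j⁆ (hprep x (z ∘ (hdel j ∘ hdel i))))⁆ else 0)) + ((∑ i ∈ Finset.range (m+2), ⁅z i, ⁅x, φ (hprep x (z ∘ hdel i))⁆⁆) + (∑ i ∈ Finset.range (m+2), ∑ k ∈ Finset.range (m+1), ⁅z i, ⁅z (hdel i k), ω x (z ∘ (hdel i ∘ hdel k))⁆⁆) + (∑ i ∈ Finset.range (m+2), ⁅z i, φ (hprep (sq x) (z ∘ hdel i))⁆) + (∑ i ∈ Finset.range (m+2), ∑ k ∈ Finset.range (m+1), ⁅z i, φ (hprep ⁅x, z (hdel i k)⁆ (hprep x (z ∘ (hdel i ∘ hdel k))))⁆) + (∑ i ∈ Finset.range (m+2), ∑ k ∈ Finset.range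 (m+1), ∑ l ∈ Finset.range (m+1), if k < l then ⁅z i, ω x (hprep ⁅z (hdel i k), z (hdel i l)⁆ (z ∘ (hdel i ∘ (hdel l ∘ hdel k))))⁆ else 0)) + ((⁅sq x, φ z⁆) + (∑ i ∈ Finset.range (m+2), ⁅z i, φ (hprep (sq x) (z ∘ hdel i))⁆) + (∑ i ∈ Finset.range (m+2), φ (hprep ⁅sq x, z i⁆ (z ∘ hdel i))) + (∑ i ∈ Finset.range (m+2), ∑ j ∈ Finset.range (m+2), if i < j then φ (hprep ⁅z i, z j⁆ (hprep (sq x) (z ∘ (hdel j ∘ hdel i)))) else 0)) + ((∑ i ∈ Finset.range (m+2), ⁅⁅x, z i⁆, φ (hprep x (z ∘ hdel i))⁆) + (∑ i ∈ Finset.range (m+2), ⁅x, φ (hprep ⁅x, z i⁆ (z ∘ hdel i))⁆) + (∑ i ∈ Finset.range (m+2), ∑ k ∈ Finset.range (m+1), ⁅z (hdel i k), φ (hprep ⁅x, z i⁆ (hprep x (z ∘ (hdel i ∘ hdel k))))⁆) + (∑ i ∈ Finset.range (m+2), φ (hprep ⁅⁅x, z i⁆, x⁆ (z ∘ hdel i)))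 + (∑ i ∈ Finset.range (m+2), ∑ k ∈ Finset.range (m+1), φ (hprep ⁅⁅x, z i⁆, z (hdel i k)⁆ (hprep x (z ∘ (hdel i ∘ hdel k))))) + (∑ i ∈ Finset.range (m+2), ∑ k ∈ Finset.range (m+1), φ (hprep ⁅x, z (hdel i k)⁆ (hprep ⁅x, z i⁆ (z ∘ (hdel i ∘ hdel k))))) + (∑ i ∈ Finset.range (m+2), ∑ k ∈ Finset.range (m+1), ∑ l ∈ Finset.range (m+1), if k < l then φ (hprep ⁅z (hdel i k), z (hdel i l)⁆ (hprep ⁅x, z i⁆ (hprep x (z ∘ (hdel i ∘ (hdel l ∘ hdel k)))))) else 0)) + ((∑ i ∈ Finset.range (m+2), ∑ j ∈ Finset.range (m+2), if i < j then (⁅x, φ (hprep x (hprep ⁅z i, z j⁆ (z ∘ (hdel j ∘ hdel i))))⁆) else 0) + (∑ i ∈ Finset.range (m+2), ∑ j ∈ Finset.range (m+2), if i < j then (⁅⁅z i, z j⁆, ω x (z ∘ (hdel j ∘ hdel i))⁆) else 0) + (∑ i ∈ Finset.range (m+2), ∑ j ∈ Finset.range (m+2), if i < j then (∑ k ∈ Finset.range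 m, ⁅z (hdel j (hdel i k)), ω x (hprep ⁅z i, z j⁆ (z ∘ (hdel j ∘ (hdel i ∘ hdel k))))⁆) else 0) + (∑ i ∈ Finset.range (m+2), ∑ j ∈ Finset.range (m+2), if i < j then (φ (hprep (sq x) (hprep ⁅z i, z j⁆ (z ∘ (hdel j ∘ hdel i))))) else 0) + (∑ i ∈ Finset.range (m+2), ∑ j ∈ Finset.range (m+2), if i < j then (φ (hprep ⁅x, ⁅z i, z j⁆⁆ (hprep x (z ∘ (hdel j ∘ hdel i))))) else 0) + (∑ i ∈ Finset.range (m+2), ∑ j ∈ Finset.range (m+2), if i < j then (∑ k ∈ Finset.range m, φ (hprep ⁅x, z (hdel j (hdel i k))⁆ (hprep x (hprep ⁅z i, z j⁆ (z ∘ (hdel j ∘ (hdel i ∘ hdel k))))))) else 0) + (∑ i ∈ Finset.range (m+2), ∑ j ∈ Finset.range (m+2), if i < j then (∑ k ∈ Finset.range m, ω x (hprep ⁅⁅z i, z j⁆, z (hdel j (hdel i k))⁆ (z ∘ (hdel j ∘ (hdel i ∘ hdel k))))) else 0) + (∑ i ∈ Finset.range (m+2), ∑ j ∈ Finset.range (m+2),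 if i < j then (∑ k ∈ Finset.range m, ∑ l ∈ Finset.range m, if k < l then ω x (hprep ⁅z (hdel j (hdel i k)), z (hdel j (hdel i l))⁆ (hprep ⁅z i, z j⁆ (z ∘ (hdel j ∘ (hdel i ∘ (hdel l ∘ hdel k)))))) else 0) else 0))
      = ((⁅x, ⁅x, φ z⁆⁆) + (⁅sq x, φ z⁆)) + ((∑ i ∈ Finset.range (m+2), ⁅x, ⁅z i, φ (hprep x (z ∘ hdel i))⁆⁆) + (∑ i ∈ Finset.range (m+2), ⁅z i, ⁅x, φ (hprep x (z ∘ hdel i))⁆⁆) + (∑ i ∈ Finset.range (m+2), ⁅⁅x, z i⁆, φ (hprep x (z ∘ hdel i))⁆)) + ((∑ i ∈ Finset.range (m+2), ⁅x, φ (hprep ⁅x, z i⁆ (z ∘ hdel i))⁆) + (∑ i ∈ Finset.range (m+2), ⁅x, φ (hprep ⁅x, z i⁆ (z ∘ hdel i))⁆)) + ((∑ i ∈ Finset.range (m+2), ∑ j ∈ Finset.range (m+2), if i < j then ⁅x, φ (hprep ⁅z i, z j⁆ (hprep x (z ∘ (hdel j ∘ hdel i))))⁆ else 0) + (∑ i ∈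 Finset.range (m+2), ∑ j ∈ Finset.range (m+2), if i < j then (⁅x, φ (hprep x (hprep ⁅z i, z j⁆ (z ∘ (hdel j ∘ hdel i))))⁆) else 0)) + ((∑ i ∈ Finset.range (m+2), ∑ k ∈ Finset.range (m+1), ⁅z i, ⁅z (hdel i k), ω x (z ∘ (hdel i ∘ hdel k))⁆⁆) + (∑ i ∈ Finset.range (m+2), ∑ j ∈ Finset.range (m+2), if i < j then (⁅⁅z i, z j⁆, ω x (z ∘ (hdel j ∘ hdel i))⁆) else 0)) + ((∑ i ∈ Finset.range (m+2), ⁅z i, φ (hprep (sq x) (z ∘ hdel i))⁆) + (∑ i ∈ Finset.range (m+2), ⁅z i, φ (hprep (sq x) (z ∘ hdel i))⁆)) + ((∑ i ∈ Finset.range (m+2), ∑ k ∈ Finset.range (m+1), ⁅z i, φ (hprep ⁅x, z (hdel i k)⁆ (hprep x (z ∘ (hdel i ∘ hdel k))))⁆) + (∑ i ∈ Finset.range (m+2), ∑ k ∈ Finset.range (m+1), ⁅z (hdel i k), φ (hprep ⁅x, z i⁆ (hprep x (z ∘ (hdel i ∘ hdel k))))⁆)) + ((∑ i ∈ Finset.range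 (m+2), ∑ k ∈ Finset.range (m+1), ∑ l ∈ Finset.range (m+1), if k < l then ⁅z i, ω x (hprep ⁅z (hdel i k), z (hdel i l)⁆ (z ∘ (hdel i ∘ (hdel l ∘ hdel k))))⁆ else 0) + (∑ i ∈ Finset.range (m+2), ∑ j ∈ Finset.range (m+2), if i < j then (∑ k ∈ Finset.range m, ⁅z (hdel j (hdel i k)), ω x (hprep ⁅z i, z j⁆ (z ∘ (hdel j ∘ (hdel i ∘ hdel k))))⁆) else 0)) + ((∑ i ∈ Finset.range (m+2), φ (hprep ⁅sq x, z i⁆ (z ∘ hdel i))) + (∑ i ∈ Finset.range (m+2), φ (hprep ⁅⁅x, z i⁆, x⁆ (z ∘ hdel i)))) + ((∑ i ∈ Finset.range (m+2), ∑ j ∈ Finset.range (m+2), if i < j then φ (hprep ⁅z i, z j⁆ (hprep (sq x) (z ∘ (hdel j ∘ hdel i)))) else 0) + (∑ i ∈ Finset.range (m+2), ∑ j ∈ Finset.range (m+2), if i < j then (φ (hprep (sq x) (hprep ⁅z i, z j⁆ (z ∘ (hdel j ∘ hdel i))))) else 0)) + ((∑ i ∈ Finset.range (m+2), ∑ k ∈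 Finset.range (m+1), φ (hprep ⁅⁅x, z i⁆, z (hdel i k)⁆ (hprep x (z ∘ (hdel i ∘ hdel k))))) + (∑ i ∈ Finset.range (m+2), ∑ j ∈ Finset.range (m+2), if i < j then (φ (hprep ⁅x, ⁅z i, z j⁆⁆ (hprep x (z ∘ (hdel j ∘ hdel i))))) else 0)) + ((∑ i ∈ Finset.range (m+2), ∑ k ∈ Finset.range (m+1), φ (hprep ⁅x, z (hdel i k)⁆ (hprep ⁅x, z i⁆ (z ∘ (hdel i ∘ hdel k)))))) + ((∑ i ∈ Finset.range (m+2), ∑ k ∈ Finset.range (m+1), ∑ l ∈ Finset.range (m+1), if k < l then φ (hprep ⁅z (hdel i k), z (hdel i l)⁆ (hprep ⁅x, z i⁆ (hprep x (z ∘ (hdel i ∘ (hdel l ∘ hdel k)))))) else 0) + (∑ i ∈ Finset.range (m+2), ∑ j ∈ Finset.range (m+2), if i < j then (∑ k ∈ Finset.range m, φ (hprep ⁅x, z (hdel j (hdel i k))⁆ (hprep x (hprep ⁅z i, z j⁆ (z ∘ (hdel j ∘ (hdel i ∘ hdel k))))))) else 0)) + ((∑ i ∈ Finset.range (m+2), ∑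 j ∈ Finset.range (m+2), if i < j then (∑ k ∈ Finset.range m, ω x (hprep ⁅⁅z i, z j⁆, z (hdel j (hdel i k))⁆ (z ∘ (hdel j ∘ (hdel i ∘ hdel k))))) else 0)) + ((∑ i ∈ Finset.range (m+2), ∑ j ∈ Finset.range (m+2), if i < j then (∑ k ∈ Finset.range m, ∑ l ∈ Finset.range m, if k < l then ω x (hprep ⁅z (hdel j (hdel i k)), z (hdel j (hdel i l))⁆ (hprep ⁅z i, z j⁆ (z ∘ (hdel j ∘ (hdel i ∘ (hdel l ∘ hdel k)))))) else 0) else 0)) := by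
    abel

  rw [reorg, hg1, hg2, hg3, hg4, hg5, hg6, hg7, hg8, hg9, hg10, hg11, hg12, hg13, hg14, hg15]
  simp
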